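/- arXiv:1309.2377 — 5 statements merged into one kernel-verified Lean document; each statement's English description precedes it below -/
import Mathlib

section
/- Let K be a field of characteristic p > 0, n ≥ 1, and for each i let Eⁱ_n(K) denote the subgroup of K-algebra automorphisms of K[x₁,…,x_n] over the subring K[x₁,…,x_{i−1},x_{i+1},…,x_n] (i.e. fixing x_j for all j ≠ i). Let 𝒜 be a subgroup of Aut_K K[x₁,…,x_n] containing Aff_n(K). If 𝒜 ⊆ ⟨Aff_n(K), E¹_n(K)∩𝒜, …, Eⁿ_n(K)∩𝒜⟩, then 𝒜 = ⟨Aff_n(K), BA_n(K) ∩ 𝒜⟩. -/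
open MvPolynomial Pointwise

noncomputable section

/-- The group of `R`-algebra automorphisms of the polynomial ring in `n` variables over `R`. -/
abbrev PolyAut (R : Type*) [CommRing R] (n : ℕ) :=
  MvPolynomial (Fin n) R ≃ₐ[R] MvPolynomial (Fin n) R

variable {R : Type*} [CommRing R]

/-- The set of affine automorphisms. -/
def affSet (R : Type*) [CommRing R] (n : ℕ) : Set (PolyAut R n) :=
  {φ | ∃ M : Matrix (Fin n) (Fin n) R, ∃ b : Fin n → R, IsUnit M.det ∧
    ∀ i, φ (X i) = (∑ j, C (M j i) * X j) + C (b i)}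

/-- The set of elementary automorphisms. -/
def elemSet (R : Type*) [CommRing R] (n : ℕ) : Set (PolyAut R n) :=
  {φ | ∃ l : Fin n, ∃ a : Rˣ, ∃ f : MvPolynomial (Fin n) R,
    f ∈ supported R ({l}ᶜ : Set (Fin n)) ∧ φ (X l) = C (a : R) * X l + f ∧
    ∀ i, i ≠ l → φ (X i) = X i}

/-- The tame subgroup. -/
def tameSubgroup (R : Type*) [CommRing R] (n : ℕ) : Subgroup (PolyAut R n) :=
  Subgroup.closure (affSet R n ∪ elemSet R n)

/-- The set of triangular (de Jonquières) automorphisms. -/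
def triSet (R : Type*) [CommRing R] (n : ℕ) : Set (PolyAut R n) :=
  {φ | ∀ i, φ (X i) ∈ supported R {j : Fin n | i ≤ j}}

/-- A polynomial `f` is additive if `f(y+z) = f(y) + f(z)`. -/
def IsAdditive {R : Type*} [CommRing R] {n : ℕ} (f : MvPolynomial (Fin n) R) : Prop :=
  aeval (fun i => X (Sum.inl i) + X (Sum.inr i)) f =
    aeval (fun i => (X (Sum.inl i) : MvPolynomial (Fin n ⊕ Fin n) R)) f +
      aeval (fun i => (X (Sum.inr i) : MvPolynomial (Fin n ⊕ Fin n) R)) f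

/-- The set of automorphisms with all components additive. -/
def addSet (R : Type*) [CommRing R] (n : ℕ) : Set (PolyAut R n) :=
  {φ | ∀ i, IsAdditive (φ (X i))}

/-- The set of translations. -/
def translSet (R : Type*) [CommRing R] (n : ℕ) : Set (PolyAut R n) :=
  {φ | ∃ b : Fin n → R, ∀ i, φ (X i) = X i + C (b i)}

/-- The geometrically affine subgroup. -/
def affGSubgroup (R : Type*) [CommRing R] (n : ℕ) : Subgroup (PolyAut R n) :=
  Subgroup.closure (addSet R n ∪ translSet R n)

/-- The set of differentially affine automorphisms: all entries of the Jacobian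
matrix are constants. -/
def diffSet (R : Type*) [CommRing R] (n : ℕ) : Set (PolyAut R n) :=
  {φ | ∀ i j : Fin n, ∃ c : R, pderiv j (φ (X i)) = C c}

/-- The geometrically tame subgroup. -/
def tameGSubgroup (R : Type*) [CommRing R] (n : ℕ) : Subgroup (PolyAut R n) :=
  affGSubgroup R n ⊔ tameSubgroup R n

/-- The differentially tame subgroup. -/
def tameDSubgroup (R : Type*) [CommRing R] (n : ℕ) : Subgroup (PolyAut R n) :=
  Subgroup.closure (diffSet R n) ⊔ tameSubgroup R n


/-- The subgroup `Eⁱ_n(K)` of automorphisms over `K[x₁,…,x̂ᵢ,…,x_n]`, i.e. fixing `x_j` for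
all `j ≠ i`, as a set. -/
def EISet (K : Type*) [CommRing K] (n : ℕ) (i : Fin n) : Set (PolyAut K n) :=
  {φ | ∀ j, j ≠ i → φ (X j) = X j}


/-
An automorphism fixing every variable except `x₁` is triangular, and an automorphism fixing
every variable except `xᵢ` becomes one fixing every variable except `x₁` after conjugation by
the transposition of `x₁` and `xᵢ`, which is affine and hence lies in `𝒜`. So each generator
in `Eⁱ_n(K) ∩ 𝒜` is a product of two affine automorphisms and an element of `BA_n(K) ∩ 𝒜`.
-/

section

variable {n : ℕ}

lemma renameEquiv_mem_affSet (e : Equiv.Perm (Fin n)) :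
    (renameEquiv R e : PolyAut R n) ∈ affSet R n := by
  refine ⟨e⁻¹.permMatrix R, 0, ?_, fun k => ?_⟩
  · rw [Matrix.det_permutation]
    exact (Int.isUnit_iff.mpr
      (Int.units_eq_one_or _ |>.imp Units.ext_iff.mp Units.ext_iff.mp)).map (Int.castRingHom R)
  · simp [Equiv.Perm.permMatrix, PEquiv.toMatrix_apply, Equiv.toPEquiv_apply, apply_ite C,
      ite_mul, Finset.sum_ite_eq', Equiv.symm_apply_eq]

lemma EISet_subset_triSet_of_isBot {i : Fin n} (hi : IsBot i) : EISet R n i ⊆ triSet R n := by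
  intro φ hφ j
  by_cases hj : j = i
  · subst hj
    simp only [hi _, Set.ofPred_true, supported_univ, Algebra.mem_top]
  · rw [hφ j hj]
    exact Algebra.subset_adjoin ⟨j, le_refl j, rfl⟩

lemma inv_mul_mul_renameEquiv_mem_EISet {i : Fin n} {φ : PolyAut R n} (hφ : φ ∈ EISet R n i)
    (e : Equiv.Perm (Fin n)) :
    (renameEquiv R e)⁻¹ * φ * renameEquiv R e ∈ EISet R n (e.symm i) := by
  intro j hj
  have hej : e j ≠ i := fun h => hj (e.eq_symm_apply.mpr h)
  change (renameEquiv R e).symm (φ (rename e (X j))) = X j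
  rw [rename_X, hφ _ hej, renameEquiv_symm, renameEquiv_apply, rename_X, Equiv.symm_apply_apply]

lemma EISet_inter_subset_closure_affSet_union_triSet {𝒜 : Subgroup (PolyAut R n)}
    (haff : affSet R n ⊆ 𝒜) (i : Fin n) :
    EISet R n i ∩ 𝒜 ⊆ Subgroup.closure (affSet R n ∪ (triSet R n ∩ 𝒜)) := by
  rintro φ ⟨hE, hA⟩
  let τ : PolyAut R n := renameEquiv R (Equiv.swap ⟨0, i.pos⟩ i)
  have hτ : τ ∈ affSet R n := renameEquiv_mem_affSet _
  have hψE : τ⁻¹ * φ * τ ∈ EISet R n ⟨0, i.pos⟩ := by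
    simpa using inv_mul_mul_renameEquiv_mem_EISet hE (Equiv.swap ⟨0, i.pos⟩ i)
  have hψ : τ⁻¹ * φ * τ ∈ triSet R n ∩ 𝒜 :=
    ⟨EISet_subset_triSet_of_isBot (fun j => Nat.zero_le (j : ℕ)) hψE,
      mul_mem (mul_mem (inv_mem (haff hτ)) hA) (haff hτ)⟩
  have hτG : τ ∈ Subgroup.closure (affSet R n ∪ (triSet R n ∩ 𝒜)) :=
    Subgroup.subset_closure (Or.inl hτ)
  rw [show φ = τ * (τ⁻¹ * φ * τ) * τ⁻¹ by group]
  exact mul_mem (mul_mem hτG (Subgroup.subset_closure (Or.inr hψ))) (inv_mem hτG)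

end

theorem subgroup_eq_closure_aff_triangular_of_elementary_general
    (K : Type*) [Field K] (n : ℕ)
    (𝒜 : Subgroup (PolyAut K n))
    (haff : affSet K n ⊆ (𝒜 : Set (PolyAut K n)))
    (hsub : (𝒜 : Set (PolyAut K n)) ⊆
      (Subgroup.closure (affSet K n ∪
        ⋃ i : Fin n, (EISet K n i ∩ (𝒜 : Set (PolyAut K n)))) : Subgroup (PolyAut K n))) :
    𝒜 = Subgroup.closure (affSet K n ∪ (triSet K n ∩ (𝒜 : Set (PolyAut K n)))) := by
  refine le_antisymm (fun φ hφ => (Subgroup.closure_le _).mpr ?_ (hsub hφ))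
    ((Subgroup.closure_le _).mpr (Set.union_subset haff Set.inter_subset_right))
  exact Set.union_subset (fun ψ hψ => Subgroup.subset_closure (Or.inl hψ))
    (Set.iUnion_subset (EISet_inter_subset_closure_affSet_union_triSet haff))

/-- **Edo–Kuroda, Lemma 2.2.**  Over a field `K` of characteristic `p > 0`, if a subgroup
`𝒜` of `Aut_K K[x₁,…,x_n]` contains `Aff_n(K)` and is contained in
`⟨Aff_n(K), E¹_n(K)∩𝒜, …, Eⁿ_n(K)∩𝒜⟩`, then `𝒜 = ⟨Aff_n(K), BA_n(K) ∩ 𝒜⟩`. -/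
theorem subgroup_eq_closure_aff_triangular_of_elementary
    (K : Type*) [Field K] (p : ℕ) (hp : 0 < p) [CharP K p] (n : ℕ) (hn : 1 ≤ n)
    (𝒜 : Subgroup (PolyAut K n))
    (haff : affSet K n ⊆ (𝒜 : Set (PolyAut K n)))
    (hsub : (𝒜 : Set (PolyAut K n)) ⊆
      (Subgroup.closure (affSet K n ∪
        ⋃ i : Fin n, (EISet K n i ∩ (𝒜 : Set (PolyAut K n)))) : Subgroup (PolyAut K n))) :
    𝒜 = Subgroup.closure (affSet K n ∪ (triSet K n ∩ (𝒜 : Set (PolyAut K n)))) :=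
  subgroup_eq_closure_aff_triangular_of_elementary_general K n 𝒜 haff hsub
end
end

section
/- In the amalgamated-product setting (𝒢 = 𝒜 *_∩ ℬ, ℋ an (𝒜,ℬ)-compatible subgroup, G a subgroup of 𝒢, A = 𝒜∩G, B = ℬ∩G, H = ℋ∩G, T = ⟨A,B⟩): let h ∈ ⟨H,T⟩ and let (θ₁,…,θ_m) be a reduced (𝒜,ℬ)-decomposition of h, and let i ∈ {1,…,m} be such that θ_i ∈ ℬ. Then: (1) if i = 1 then θ₁ ∈ B·(ℬ∩ℋ); (2) if i = m then θ_m ∈ (ℬ∩ℋ)·B; (3) if 1 < i < m then θ_i ∈ (ℬ∩ℋ)·B·(ℬ∩ℋ). (Here products denote setwise products of subsets of 𝒢.) -/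
/-!
Call a letter `x ∈ F` (`F = 𝒜` or `ℬ`) of an alternating word, read after the prefix product `p`,
anchored if `x ∈ ℋ` or both `p` and `p * x` lie in `G₀ (F ∩ ℋ)`. Build a word for `h ∈ ⟨H, T⟩` by
multiplying generators onto it one at a time and reducing at the right end (append a letter, merge
it into the last one, or cancel the last one into its predecessor). Anchoring survives every step:
generators from `A` or `B` are only multiplied onto elements of `G₀`, and an element of `H` is
first split into factors from `𝒜 ∩ ℋ` and `ℬ ∩ ℋ`, which are letters in `ℋ`. Two reduced
decompositions of the same element have prefix products that differ by right factors from
`𝒜 ∩ ℬ ⊆ ℋ`, and this also preserves anchoring. So every reduced decomposition of `h` is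
anchored. If `θᵢ ∈ ℬ` has prefixes `p = a y` and `p θᵢ = a' y'`, then `θᵢ = y⁻¹ (a⁻¹ a') y'`
with `a⁻¹ a' ∈ ℬ ∩ G₀`; at the two ends one uses `p = 1` or `p θᵢ = h`.
-/

open Pointwise

section Amalgam

variable {G : Type*} [Group G]

/-- `(A,B)`-reduced words: nonempty, every letter in `(A∖B) ∪ (B∖A)`, and no product of
consecutive letters in `A ∪ B`. -/
def IsReducedWord (A B : Set G) (w : List G) : Prop :=
  w ≠ [] ∧ (∀ x ∈ w, x ∈ (A \ B) ∪ (B \ A)) ∧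
    List.Chain' (fun a b => a * b ∉ A ∪ B) w

/-- `⟨A,B⟩` is the amalgamated product of `A` and `B` over `A ∩ B`: no nonempty reduced
word has product `1`. -/
def IsAmalgamated (A B : Set G) : Prop :=
  ∀ w : List G, IsReducedWord A B w → w.prod ≠ 1

/-- A reduced `(A,B)`-decomposition of `γ`. -/
def IsReducedDecomp (A B : Set G) (γ : G) (w : List G) : Prop :=
  IsReducedWord A B w ∧ w.prod = γ

end Amalgam

namespace Amalgam

variable {𝒢 : Type*} [Group 𝒢]

section Alternating

variable (𝒜 ℬ : Subgroup 𝒢)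

def IsAlternating (w : List 𝒢) : Prop :=
  (∀ x ∈ w, x ∈ 𝒜 ↔ x ∉ ℬ) ∧ w.IsChain (fun x y => x ∈ 𝒜 ↔ y ∉ 𝒜)

variable {𝒜 ℬ}

theorem isAlternating_nil : IsAlternating 𝒜 ℬ [] := ⟨by simp, .nil⟩

theorem isAlternating_singleton {x : 𝒢} : IsAlternating 𝒜 ℬ [x] ↔ (x ∈ 𝒜 ↔ x ∉ ℬ) := by
  simp [IsAlternating]

theorem isAlternating_append {v w : List 𝒢} :
    IsAlternating 𝒜 ℬ (v ++ w) ↔ IsAlternating 𝒜 ℬ v ∧ IsAlternating 𝒜 ℬ w ∧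
      ∀ x ∈ v.getLast?, ∀ y ∈ w.head?, (x ∈ 𝒜 ↔ y ∉ 𝒜) := by
  simp only [IsAlternating, List.mem_append, or_imp, forall_and, List.isChain_append]
  tauto

theorem mul_notMem_union_iff {x y : 𝒢} (hx : x ∈ 𝒜 ↔ x ∉ ℬ) (hy : y ∈ 𝒜 ↔ y ∉ ℬ) :
    x * y ∉ (𝒜 : Set 𝒢) ∪ ℬ ↔ (x ∈ 𝒜 ↔ y ∉ 𝒜) := by
  simp only [Set.mem_union, SetLike.mem_coe, not_or]
  by_cases hxA : x ∈ 𝒜 <;> by_cases hyA : y ∈ 𝒜 <;>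
    simp_all [Subgroup.mul_mem_cancel_left, Subgroup.mul_mem_cancel_right, mul_mem]

theorem isReducedWord_iff {w : List 𝒢} :
    IsReducedWord (𝒜 : Set 𝒢) ℬ w ↔ w ≠ [] ∧ IsAlternating 𝒜 ℬ w := by
  have hletter : ∀ x : 𝒢, x ∈ (𝒜 : Set 𝒢) \ ℬ ∪ ℬ \ 𝒜 ↔ (x ∈ 𝒜 ↔ x ∉ ℬ) := by
    intro x; simp only [Set.mem_union, Set.mem_sdiff, SetLike.mem_coe]; tauto
  simp only [IsReducedWord, IsAlternating, hletter]
  refine and_congr_right fun _ => and_congr_right fun hw => ⟨fun h => ?_, fun h => ?_⟩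
  · exact (List.IsChain.iff_mem.mp h).imp fun x y ⟨hx, hy, hxy⟩ =>
      (mul_notMem_union_iff (hw x hx) (hw y hy)).mp hxy
  · exact (List.IsChain.iff_mem.mp h).imp fun x y ⟨hx, hy, hxy⟩ =>
      (mul_notMem_union_iff (hw x hx) (hw y hy)).mpr hxy

theorem IsAlternating.symm {w : List 𝒢} (hw : IsAlternating 𝒜 ℬ w) : IsAlternating ℬ 𝒜 w := by
  refine ⟨fun x hx => by have := hw.1 x hx; tauto, ?_⟩
  exact (List.IsChain.iff_mem.mp hw.2).imp fun x y ⟨hx, hy, hxy⟩ => by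
    have := hw.1 x hx; have := hw.1 y hy; tauto

theorem IsAlternating.inv_reverse {w : List 𝒢} (hw : IsAlternating 𝒜 ℬ w) :
    IsAlternating 𝒜 ℬ (w.map (·⁻¹)).reverse := by
  refine ⟨fun x hx => ?_, ?_⟩
  · obtain ⟨y, hy, rfl⟩ := List.mem_map.mp (List.mem_reverse.mp hx)
    simpa using hw.1 y hy
  rw [List.isChain_reverse, List.isChain_map]
  exact hw.2.imp fun x y hxy => by simp only [inv_mem_iff]; tauto

theorem IsAlternating.concat_of_mem_iff {w : List 𝒢} {x y : 𝒢}
    (hw : IsAlternating 𝒜 ℬ (w ++ [x])) (hy : y ∈ 𝒜 ↔ y ∉ ℬ) (hxy : y ∈ 𝒜 ↔ x ∈ 𝒜) :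
    IsAlternating 𝒜 ℬ (w ++ [y]) := by
  obtain ⟨hw, -, hj⟩ := isAlternating_append.mp hw
  exact isAlternating_append.mpr ⟨hw, isAlternating_singleton.mpr hy, by simpa [hxy] using hj⟩

theorem IsAlternating.concat_mul_of_mem_inf {w : List 𝒢} {x c : 𝒢}
    (hw : IsAlternating 𝒜 ℬ (w ++ [x])) (hc : c ∈ 𝒜 ⊓ ℬ) : IsAlternating 𝒜 ℬ (w ++ [x * c]) := by
  have hx := isAlternating_singleton.mp (isAlternating_append.mp hw).2.1
  refine hw.concat_of_mem_iff ?_ (Subgroup.mul_mem_cancel_right _ hc.1)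
  rwa [Subgroup.mul_mem_cancel_right _ hc.1, Subgroup.mul_mem_cancel_right _ hc.2]

section Amalgamated

variable (hamal : IsAmalgamated (𝒜 : Set 𝒢) ℬ)
include hamal

theorem IsAlternating.prod_ne_one {w : List 𝒢} (hw : IsAlternating 𝒜 ℬ w) (hne : w ≠ []) :
    w.prod ≠ 1 :=
  hamal w (isReducedWord_iff.mpr ⟨hne, hw⟩)

theorem IsAlternating.prod_notMem_inf {w : List 𝒢} (hw : IsAlternating 𝒜 ℬ w)
    (hne : w ≠ []) : w.prod ∉ 𝒜 ⊓ ℬ := by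
  intro hc
  obtain ⟨v, x, rfl⟩ := (List.eq_nil_or_concat' w).resolve_left hne
  refine (hw.concat_mul_of_mem_inf (inv_mem hc)).prod_ne_one hamal (by simp) ?_
  simp

theorem mul_mem_inf_of_prod_eq_one {u u' : List 𝒢} {x y : 𝒢}
    (hu : IsAlternating 𝒜 ℬ (u ++ [x])) (hu' : IsAlternating 𝒜 ℬ (y :: u'))
    (h : (u ++ [x] ++ y :: u').prod = 1) : x * y ∈ 𝒜 ⊓ ℬ := by
  by_contra hxy
  by_cases hside : x ∈ 𝒜 ↔ y ∉ 𝒜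
  · exact (isAlternating_append.mpr ⟨hu, hu', by simpa using hside⟩).prod_ne_one hamal
      (by simp) h
  · rw [isAlternating_append, isAlternating_singleton] at hu
    rw [← List.singleton_append, isAlternating_append, isAlternating_singleton] at hu'
    have hxyA : x * y ∈ 𝒜 ↔ x ∈ 𝒜 := by
      by_cases hxA : x ∈ 𝒜 <;> simp_all [Subgroup.mul_mem_cancel_left]
    have hxyB : x * y ∈ ℬ ↔ x ∈ ℬ := by
      by_cases hxB : x ∈ ℬ <;> simp_all [Subgroup.mul_mem_cancel_left]
    have hyA : x * y ∈ 𝒜 ↔ y ∈ 𝒜 := by rw [hxyA]; tauto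
    have hmerge : IsAlternating 𝒜 ℬ (u ++ [x * y] ++ u') := by
      refine isAlternating_append.mpr ⟨isAlternating_append.mpr ⟨hu.1, ?_, ?_⟩, hu'.2.1, ?_⟩
      · rw [isAlternating_singleton, hxyA, hxyB]; exact hu.2.1
      · simpa [hxyA] using hu.2.2
      · simpa [hyA] using hu'.2.2
    exact hmerge.prod_ne_one hamal (by simp) (by simpa [mul_assoc] using h)

theorem prod_inv_mul_prod_mem_inf_of_concat {v w : List 𝒢} {a b : 𝒢}
    (hv : IsAlternating 𝒜 ℬ (v ++ [a])) (hw : IsAlternating 𝒜 ℬ (w ++ [b]))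
    (h : (v ++ [a]).prod⁻¹ * (w ++ [b]).prod ∈ 𝒜 ⊓ ℬ) : v.prod⁻¹ * w.prod ∈ 𝒜 ⊓ ℬ := by
  have hw' : IsAlternating 𝒜 ℬ (b⁻¹ :: (w.map (·⁻¹)).reverse) := by
    simpa using hw.inv_reverse
  have hcore := mul_mem_inf_of_prod_eq_one hamal (hv.concat_mul_of_mem_inf h) hw' (by
    simp only [List.prod_append, List.prod_cons, List.prod_nil, ← List.prod_inv_reverse]
    group)
  convert hcore using 1
  simp only [List.prod_append, List.prod_singleton]
  group

end Amalgamated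

end Alternating

section Anchored

theorem mem_mul_of_mul_mem {S K : Subgroup 𝒢} {g k : 𝒢} (hg : g * k ∈ S) (hk : k ∈ K) :
    g ∈ (S : Set 𝒢) * K :=
  ⟨g * k, hg, k⁻¹, inv_mem hk, by group⟩

theorem mul_mem_mul_of_mem {S K : Subgroup 𝒢} {g k : 𝒢} (hg : g ∈ (S : Set 𝒢) * K)
    (hk : k ∈ K) : g * k ∈ (S : Set 𝒢) * K := by
  obtain ⟨a, ha, y, hy, rfl⟩ := hg
  exact ⟨a, ha, y * k, mul_mem hy hk, (mul_assoc a y k).symm⟩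

variable (ℋ G₀ : Subgroup 𝒢)

def IsAnchoredLetter (F : Subgroup 𝒢) (p x : 𝒢) : Prop :=
  x ∈ F → x ∈ ℋ ∨ (p ∈ (G₀ : Set 𝒢) * (F ⊓ ℋ : Subgroup 𝒢) ∧
    p * x ∈ (G₀ : Set 𝒢) * (F ⊓ ℋ : Subgroup 𝒢))

variable {ℋ G₀} {F : Subgroup 𝒢} {p x : 𝒢}

theorem isAnchoredLetter_of_mem (hx : x ∈ ℋ) : IsAnchoredLetter ℋ G₀ F p x :=
  fun _ => .inl hx

theorem isAnchoredLetter_of_notMem (hx : x ∉ F) : IsAnchoredLetter ℋ G₀ F p x :=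
  fun h => absurd h hx

theorem IsAnchoredLetter.conj {c c' : 𝒢} (h : IsAnchoredLetter ℋ G₀ F p x) (hc : c ∈ F ⊓ ℋ)
    (hc' : c' ∈ F ⊓ ℋ) : IsAnchoredLetter ℋ G₀ F (p * c) (c⁻¹ * x * c') := by
  intro hx'
  obtain ⟨hcF, hcH⟩ := Subgroup.mem_inf.mp hc
  obtain ⟨hcF', hcH'⟩ := Subgroup.mem_inf.mp hc'
  have hx : x ∈ F := by
    rw [show x = c * (c⁻¹ * x * c') * c'⁻¹ by group]
    exact mul_mem (mul_mem hcF hx') (inv_mem hcF')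
  rcases h hx with hH | ⟨hp, hpx⟩
  · exact .inl (mul_mem (mul_mem (inv_mem hcH) hH) hcH')
  · refine .inr ⟨mul_mem_mul_of_mem hp hc, ?_⟩
    simpa [mul_assoc] using mul_mem_mul_of_mem hpx hc'

theorem IsAnchoredLetter.mul_right {c : 𝒢} (h : IsAnchoredLetter ℋ G₀ F p x)
    (hc : c ∈ F ⊓ ℋ) : IsAnchoredLetter ℋ G₀ F p (x * c) := by
  simpa using h.conj (one_mem _) hc

theorem IsAnchoredLetter.mem_mul_of_one (h : IsAnchoredLetter ℋ G₀ F 1 x) (hx : x ∈ F) :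
    x ∈ ((F ⊓ G₀ : Subgroup 𝒢) : Set 𝒢) * ((F ⊓ ℋ : Subgroup 𝒢) : Set 𝒢) := by
  rcases h hx with hH | ⟨-, a, ha, y, hy, hay⟩
  · exact ⟨1, one_mem _, x, Subgroup.mem_inf.mpr ⟨hx, hH⟩, one_mul x⟩
  · have ha' : a = x * y⁻¹ := by rw [one_mul] at hay; rw [← hay]; group
    have hyF := (Subgroup.mem_inf.mp hy).1
    exact ⟨a, Subgroup.mem_inf.mpr ⟨ha' ▸ mul_mem hx (inv_mem hyF), ha⟩, y, hy,
      hay.trans (one_mul x)⟩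

theorem IsAnchoredLetter.mem_mul_of_mul_mem (h : IsAnchoredLetter ℋ G₀ F p x) (hx : x ∈ F)
    (hpx : p * x ∈ G₀) :
    x ∈ ((F ⊓ ℋ : Subgroup 𝒢) : Set 𝒢) * ((F ⊓ G₀ : Subgroup 𝒢) : Set 𝒢) := by
  rcases h hx with hH | ⟨⟨a, ha, y, hy, rfl⟩, -⟩
  · exact ⟨x, Subgroup.mem_inf.mpr ⟨hx, hH⟩, 1, one_mem _, mul_one x⟩
  · have hb : a⁻¹ * (a * y * x) = y * x := by group
    have hyF := (Subgroup.mem_inf.mp hy).1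
    exact ⟨y⁻¹, inv_mem hy, a⁻¹ * (a * y * x),
      Subgroup.mem_inf.mpr ⟨hb ▸ mul_mem hyF hx, mul_mem (inv_mem ha) hpx⟩, by group⟩

theorem IsAnchoredLetter.mem_mul_mul (h : IsAnchoredLetter ℋ G₀ F p x) (hx : x ∈ F) :
    x ∈ ((F ⊓ ℋ : Subgroup 𝒢) : Set 𝒢) * ((F ⊓ G₀ : Subgroup 𝒢) : Set 𝒢) *
      ((F ⊓ ℋ : Subgroup 𝒢) : Set 𝒢) := by
  rcases h hx with hH | ⟨⟨a, ha, y, hy, rfl⟩, ⟨a', ha', y', hy', hpx⟩⟩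
  · exact ⟨x, ⟨x, Subgroup.mem_inf.mpr ⟨hx, hH⟩, 1, one_mem _, mul_one x⟩, 1, one_mem _,
      mul_one x⟩
  · have hb : a⁻¹ * a' = y * x * y'⁻¹ := by
      rw [eq_mul_inv_iff_mul_eq, mul_assoc, show a' * y' = a * y * x from hpx]; group
    have hyF := (Subgroup.mem_inf.mp hy).1
    have hyF' := (Subgroup.mem_inf.mp hy').1
    refine ⟨y⁻¹ * (a⁻¹ * a'), ⟨y⁻¹, inv_mem hy, a⁻¹ * a', ?_, rfl⟩, y', hy', ?_⟩
    · exact Subgroup.mem_inf.mpr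
        ⟨hb ▸ mul_mem (mul_mem hyF hx) (inv_mem hyF'), mul_mem (inv_mem ha) ha'⟩
    · rw [hb]; group

theorem isAnchoredLetter_of_mul_mem {c : 𝒢} (hc : c ∈ F ⊓ ℋ) (hpc : p * c ∈ G₀)
    (hpx : p * x ∈ G₀) : IsAnchoredLetter ℋ G₀ F p x :=
  fun _ => .inr ⟨mem_mul_of_mul_mem hpc hc, Set.subset_mul_left _ (one_mem _) hpx⟩

theorem IsAnchoredLetter.of_mul_mem {a c : 𝒢} (h : IsAnchoredLetter ℋ G₀ F p a) (ha : a ∈ F)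
    (hc : c ∈ F ⊓ ℋ) (hpac : p * a * c ∈ G₀) (hpx : p * x ∈ G₀) :
    IsAnchoredLetter ℋ G₀ F p x := by
  by_cases haH : a ∈ ℋ
  · refine isAnchoredLetter_of_mul_mem (mul_mem (Subgroup.mem_inf.mpr ⟨ha, haH⟩) hc) ?_ hpx
    rwa [← mul_assoc]
  · exact fun _ => .inr ⟨((h ha).resolve_left haH).1,
      Set.subset_mul_left _ (one_mem _) hpx⟩

end Anchored

section Words

variable (𝒜 ℬ ℋ G₀ : Subgroup 𝒢)

def IsAnchored (w : List 𝒢) : Prop :=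
  ∀ u x, u ++ [x] <+: w → IsAnchoredLetter ℋ G₀ 𝒜 u.prod x ∧ IsAnchoredLetter ℋ G₀ ℬ u.prod x

-- The slack in `𝒜 ⊓ ℬ` lets the empty word stand for the elements of `𝒜 ⊓ ℬ`.
def HasAnchoredForm (g : 𝒢) : Prop :=
  ∃ φ, IsAlternating 𝒜 ℬ φ ∧ IsAnchored 𝒜 ℬ ℋ G₀ φ ∧ φ.prod⁻¹ * g ∈ 𝒜 ⊓ ℬ

variable {𝒜 ℬ ℋ G₀}

theorem isAnchored_nil : IsAnchored 𝒜 ℬ ℋ G₀ [] := by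
  intro u x h
  simpa using h.length_le

theorem isAnchored_concat {w : List 𝒢} {x : 𝒢} :
    IsAnchored 𝒜 ℬ ℋ G₀ (w ++ [x]) ↔ IsAnchored 𝒜 ℬ ℋ G₀ w ∧
      IsAnchoredLetter ℋ G₀ 𝒜 w.prod x ∧ IsAnchoredLetter ℋ G₀ ℬ w.prod x := by
  simp only [IsAnchored, List.prefix_concat_iff, List.append_singleton_inj, forall_and, or_imp,
    and_imp, forall_eq_apply_imp_iff, forall_eq]
  tauto

theorem IsAnchored.symm {w : List 𝒢} (h : IsAnchored 𝒜 ℬ ℋ G₀ w) : IsAnchored ℬ 𝒜 ℋ G₀ w :=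
  fun u x hu => (h u x hu).symm

theorem IsAnchored.of_prod_inv_mul_mem_inf (hamal : IsAmalgamated (𝒜 : Set 𝒢) ℬ)
    (hC : 𝒜 ⊓ ℬ ≤ ℋ) {v w : List 𝒢} (hv : IsAlternating 𝒜 ℬ v) (hw : IsAlternating 𝒜 ℬ w)
    (hvw : v.prod⁻¹ * w.prod ∈ 𝒜 ⊓ ℬ) (hanc : IsAnchored 𝒜 ℬ ℋ G₀ v) :
    IsAnchored 𝒜 ℬ ℋ G₀ w := by
  induction v using List.reverseRecOn generalizing w with
  | nil =>
    obtain rfl : w = [] := by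
      by_contra hne
      exact hw.prod_notMem_inf hamal hne (by simpa using hvw)
    exact isAnchored_nil
  | append_singleton v a ih =>
    obtain ⟨w, b, rfl⟩ := (List.eq_nil_or_concat' w).resolve_left <| by
      rintro rfl
      exact hv.prod_notMem_inf hamal (by simp) (by simpa using inv_mem hvw)
    have hc := prod_inv_mul_prod_mem_inf_of_concat hamal hv hw hvw
    have hletter : ∀ F : Subgroup 𝒢, 𝒜 ⊓ ℬ ≤ F ⊓ ℋ →
        IsAnchoredLetter ℋ G₀ F v.prod a → IsAnchoredLetter ℋ G₀ F w.prod b := by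
      intro F hF ha
      convert ha.conj (hF hc) (hF hvw) using 1
      · group
      · simp only [List.prod_append, List.prod_singleton]; group
    rw [isAnchored_concat] at hanc ⊢
    exact ⟨ih (isAlternating_append.mp hv).1 (isAlternating_append.mp hw).1 hc hanc.1,
      hletter 𝒜 (le_inf inf_le_left hC) hanc.2.1, hletter ℬ (le_inf inf_le_right hC) hanc.2.2⟩

theorem hasAnchoredForm_one : HasAnchoredForm 𝒜 ℬ ℋ G₀ 1 :=
  ⟨[], isAlternating_nil, isAnchored_nil, by simp⟩

theorem HasAnchoredForm.symm {g : 𝒢} (h : HasAnchoredForm 𝒜 ℬ ℋ G₀ g) :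
    HasAnchoredForm ℬ 𝒜 ℋ G₀ g := by
  obtain ⟨φ, halt, hanc, hc⟩ := h
  exact ⟨φ, halt.symm, hanc.symm, by rwa [inf_comm]⟩

theorem hasAnchoredForm_concat_mul (hC : 𝒜 ⊓ ℬ ≤ ℋ) {ψ : List 𝒢} {a w : 𝒢}
    (halt : IsAlternating 𝒜 ℬ (ψ ++ [a])) (hanc : IsAnchored 𝒜 ℬ ℋ G₀ (ψ ++ [a]))
    (ha : a ∈ 𝒜) (hw : w ∈ 𝒜) (haw : IsAnchoredLetter ℋ G₀ 𝒜 ψ.prod (a * w)) :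
    HasAnchoredForm 𝒜 ℬ ℋ G₀ ((ψ ++ [a]).prod * w) := by
  obtain ⟨hψanc, -, -⟩ := isAnchored_concat.mp hanc
  by_cases hawB : a * w ∈ ℬ
  · have hu : a * w ∈ 𝒜 ⊓ ℬ := Subgroup.mem_inf.mpr ⟨mul_mem ha hw, hawB⟩
    rcases List.eq_nil_or_concat' ψ with rfl | ⟨ψ, d, rfl⟩
    · exact ⟨[], isAlternating_nil, isAnchored_nil, by simpa using hu⟩
    obtain ⟨hψanc, hdA, hdB⟩ := isAnchored_concat.mp hψanc
    refine ⟨ψ ++ [d * (a * w)], (isAlternating_append.mp halt).1.concat_mul_of_mem_inf hu,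
      isAnchored_concat.mpr ⟨hψanc, hdA.mul_right (le_inf inf_le_left hC hu),
        hdB.mul_right (le_inf inf_le_right hC hu)⟩, by simp [mul_assoc]⟩
  · refine ⟨ψ ++ [a * w], halt.concat_of_mem_iff ?_ ?_,
      isAnchored_concat.mpr ⟨hψanc, haw, isAnchoredLetter_of_notMem hawB⟩, by simp [mul_assoc]⟩
    · simp [mul_mem ha hw, hawB]
    · simp [mul_mem ha hw, ha]

theorem HasAnchoredForm.mul_of_mem_left (hC : 𝒜 ⊓ ℬ ≤ ℋ) {g z : 𝒢}
    (hg : HasAnchoredForm 𝒜 ℬ ℋ G₀ g) (hz : z ∈ 𝒜) (hzH : z ∈ ℋ ∨ z ∈ G₀ ∧ g ∈ G₀) :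
    HasAnchoredForm 𝒜 ℬ ℋ G₀ (g * z) := by
  obtain ⟨φ, halt, hanc, hc⟩ := hg
  set c := φ.prod⁻¹ * g with hcdef
  have hφc : φ.prod * c = g := by rw [hcdef]; group
  have hcA : c ∈ 𝒜 ⊓ ℋ := le_inf inf_le_left hC hc
  have hwA : c * z ∈ 𝒜 := mul_mem hc.1 hz
  rw [← hφc, mul_assoc]
  by_cases hwB : c * z ∈ ℬ
  · exact ⟨φ, halt, hanc, by simpa using Subgroup.mem_inf.mpr ⟨hwA, hwB⟩⟩
  by_cases hlast : ∃ ψ a, φ = ψ ++ [a] ∧ a ∈ 𝒜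
  · obtain ⟨ψ, a, rfl, ha⟩ := hlast
    refine hasAnchoredForm_concat_mul hC halt hanc ha hwA ?_
    rcases hzH with hzH | ⟨hzG, hgG⟩
    · exact (isAnchored_concat.mp hanc).2.1.mul_right
        (Subgroup.mem_inf.mpr ⟨hwA, mul_mem (hC hc) hzH⟩)
    · have hφG : (ψ ++ [a]).prod * c ∈ G₀ := hφc ▸ hgG
      refine (isAnchored_concat.mp hanc).2.1.of_mul_mem ha hcA (by simpa [mul_assoc] using hφG) ?_
      simpa [mul_assoc] using mul_mem hφG hzG
  · refine ⟨φ ++ [c * z], isAlternating_append.mpr ⟨halt, ?_, ?_⟩,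
      isAnchored_concat.mpr ⟨hanc, ?_, isAnchoredLetter_of_notMem hwB⟩, by simp⟩
    · simp [isAlternating_singleton, hwA, hwB]
    · intro y hy q hq
      have hyA : y ∉ 𝒜 := fun hyA => hlast ⟨_, y, (List.dropLast_append_getLast? y hy).symm, hyA⟩
      simp_all
    rcases hzH with hzH | ⟨hzG, hgG⟩
    · exact isAnchoredLetter_of_mem (mul_mem (hC hc) hzH)
    · have hφG : φ.prod * c ∈ G₀ := hφc ▸ hgG
      exact isAnchoredLetter_of_mul_mem hcA hφG (by simpa [mul_assoc] using mul_mem hφG hzG)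

theorem HasAnchoredForm.mul_of_mem_right (hC : 𝒜 ⊓ ℬ ≤ ℋ) {g z : 𝒢}
    (hg : HasAnchoredForm 𝒜 ℬ ℋ G₀ g) (hz : z ∈ ℬ) (hzH : z ∈ ℋ ∨ z ∈ G₀ ∧ g ∈ G₀) :
    HasAnchoredForm 𝒜 ℬ ℋ G₀ (g * z) :=
  (hg.symm.mul_of_mem_left (inf_comm ℬ 𝒜 ▸ hC) hz hzH).symm

theorem HasAnchoredForm.mul_of_mem_sup (hC : 𝒜 ⊓ ℬ ≤ ℋ) {g η : 𝒢}
    (hg : HasAnchoredForm 𝒜 ℬ ℋ G₀ g) (hη : η ∈ (𝒜 ⊓ ℋ) ⊔ (ℬ ⊓ ℋ)) :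
    HasAnchoredForm 𝒜 ℬ ℋ G₀ (g * η) := by
  have hstep : ∀ x y, HasAnchoredForm 𝒜 ℬ ℋ G₀ (g * x) →
      y ∈ ((𝒜 ⊓ ℋ : Subgroup 𝒢) : Set 𝒢) ∪ (ℬ ⊓ ℋ : Subgroup 𝒢) →
      HasAnchoredForm 𝒜 ℬ ℋ G₀ (g * (x * y)) := by
    rintro x y hx (hy | hy) <;> rw [← mul_assoc]
    · exact hx.mul_of_mem_left hC hy.1 (.inl hy.2)
    · exact hx.mul_of_mem_right hC hy.1 (.inl hy.2)
  rw [Subgroup.sup_eq_closure] at hη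
  induction hη using Subgroup.closure_induction_right with
  | one => simpa using hg
  | mul_right x _ y hy ih => exact hstep x y ih hy
  | mul_inv_cancel x _ y hy ih =>
    exact hstep x y⁻¹ ih (hy.imp (fun h => inv_mem h) (fun h => inv_mem h))

theorem hasAnchoredForm_of_mem (hC : 𝒜 ⊓ ℬ ≤ ℋ) (hℋ : ℋ = (𝒜 ⊓ ℋ) ⊔ (ℬ ⊓ ℋ)) {h : 𝒢}
    (hh : h ∈ (ℋ ⊓ G₀) ⊔ ((𝒜 ⊓ G₀) ⊔ (ℬ ⊓ G₀))) : HasAnchoredForm 𝒜 ℬ ℋ G₀ h := by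
  set S : Set 𝒢 := (ℋ ⊓ G₀ : Subgroup 𝒢) ∪ ((𝒜 ⊓ G₀ : Subgroup 𝒢) ∪ (ℬ ⊓ G₀ : Subgroup 𝒢))
  have hS : Subgroup.closure S = (ℋ ⊓ G₀) ⊔ ((𝒜 ⊓ G₀) ⊔ (ℬ ⊓ G₀)) := by
    simp only [S, Subgroup.closure_union, Subgroup.closure_eq]
  have hSG : Subgroup.closure S ≤ G₀ :=
    (Subgroup.closure_le _).mpr (by rintro y (hy | hy | hy) <;> exact hy.2)
  have hstep : ∀ x y, x ∈ Subgroup.closure S → HasAnchoredForm 𝒜 ℬ ℋ G₀ x → y ∈ S →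
      HasAnchoredForm 𝒜 ℬ ℋ G₀ (x * y) := by
    rintro x y hxS hx (hy | hy | hy)
    · exact hx.mul_of_mem_sup hC (hℋ ▸ hy.1)
    · exact hx.mul_of_mem_left hC hy.1 (.inr ⟨hy.2, hSG hxS⟩)
    · exact hx.mul_of_mem_right hC hy.1 (.inr ⟨hy.2, hSG hxS⟩)
  rw [← hS] at hh
  induction hh using Subgroup.closure_induction_right with
  | one => exact hasAnchoredForm_one
  | mul_right x hxS y hy ih => exact hstep x y hxS ih hy
  | mul_inv_cancel x hxS y hy ih =>
    exact hstep x y⁻¹ hxS ih (hy.imp (fun h => inv_mem h) (Or.imp (fun h => inv_mem h)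
      (fun h => inv_mem h)))

end Words

end Amalgam

theorem reduced_decomposition_letters_mem_general {𝒢 : Type*} [Group 𝒢] (𝒜 ℬ ℋ G₀ : Subgroup 𝒢)
    (hamal : IsAmalgamated (𝒜 : Set 𝒢) (ℬ : Set 𝒢))
    (hcomp₁ : 𝒜 ⊓ ℬ ≤ ℋ)
    (hcomp₂ : ℋ = (𝒜 ⊓ ℋ) ⊔ (ℬ ⊓ ℋ))
    (h : 𝒢) (hh : h ∈ (ℋ ⊓ G₀) ⊔ ((𝒜 ⊓ G₀) ⊔ (ℬ ⊓ G₀)))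
    (θ : List 𝒢) (hθ : IsReducedDecomp (𝒜 : Set 𝒢) (ℬ : Set 𝒢) h θ)
    (i : Fin θ.length) (hi : θ.get i ∈ ℬ) :
    (i.val = 0 →
      θ.get i ∈ ((ℬ ⊓ G₀ : Subgroup 𝒢) : Set 𝒢) * ((ℬ ⊓ ℋ : Subgroup 𝒢) : Set 𝒢)) ∧
    (i.val = θ.length - 1 →
      θ.get i ∈ ((ℬ ⊓ ℋ : Subgroup 𝒢) : Set 𝒢) * ((ℬ ⊓ G₀ : Subgroup 𝒢) : Set 𝒢)) ∧
    (0 < i.val → i.val < θ.length - 1 →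
      θ.get i ∈ ((ℬ ⊓ ℋ : Subgroup 𝒢) : Set 𝒢) * ((ℬ ⊓ G₀ : Subgroup 𝒢) : Set 𝒢) *
        ((ℬ ⊓ ℋ : Subgroup 𝒢) : Set 𝒢)) := by
  obtain ⟨hred, rfl⟩ := hθ
  obtain ⟨φ, hφalt, hφanc, hφθ⟩ := Amalgam.hasAnchoredForm_of_mem hcomp₁ hcomp₂ hh
  have hθanc := hφanc.of_prod_inv_mul_mem_inf hamal hcomp₁ hφalt
    (Amalgam.isReducedWord_iff.mp hred).2 hφθ
  have hletter : Amalgam.IsAnchoredLetter ℋ G₀ ℬ (θ.take i).prod (θ.get i) :=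
    (hθanc _ _ (by simpa using List.take_prefix (i + 1) θ)).2
  refine ⟨fun h0 => ?_, fun hlast => hletter.mem_mul_of_mul_mem hi ?_,
    fun _ _ => hletter.mem_mul_mul hi⟩
  · simp only [h0, List.take_zero, List.prod_nil] at hletter
    exact hletter.mem_mul_of_one hi
  · have hG₀ : (ℋ ⊓ G₀) ⊔ ((𝒜 ⊓ G₀) ⊔ (ℬ ⊓ G₀)) ≤ G₀ :=
      sup_le inf_le_right (sup_le inf_le_right inf_le_right)
    convert hG₀ hh using 1
    rw [List.get_eq_getElem, ← List.prod_take_succ, hlast, Nat.sub_add_cancel (by omega),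
      List.take_length]

/-- **Edo–Kuroda, Corollary 3.9.**  In the amalgamated-product setting, let
`h ∈ ⟨H,T⟩` have reduced `(𝒜,ℬ)`-decomposition `(θ₁,…,θ_m)` and let `θ_i ∈ ℬ`.  Then
`θ₁ ∈ B·(ℬ∩ℋ)` if `i = 1`, `θ_m ∈ (ℬ∩ℋ)·B` if `i = m`, and
`θ_i ∈ (ℬ∩ℋ)·B·(ℬ∩ℋ)` if `1 < i < m`. -/
theorem reduced_decomposition_letters_mem {𝒢 : Type*} [Group 𝒢] (𝒜 ℬ ℋ G₀ : Subgroup 𝒢)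
    (hgen : 𝒜 ⊔ ℬ = ⊤)
    (hamal : IsAmalgamated (𝒜 : Set 𝒢) (ℬ : Set 𝒢))
    (hcomp₁ : 𝒜 ⊓ ℬ ≤ ℋ)
    (hcomp₂ : ℋ = (𝒜 ⊓ ℋ) ⊔ (ℬ ⊓ ℋ))
    (h : 𝒢) (hh : h ∈ (ℋ ⊓ G₀) ⊔ ((𝒜 ⊓ G₀) ⊔ (ℬ ⊓ G₀)))
    (θ : List 𝒢) (hθ : IsReducedDecomp (𝒜 : Set 𝒢) (ℬ : Set 𝒢) h θ)
    (i : Fin θ.length) (hi : θ.get i ∈ ℬ) :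
    (i.val = 0 →
      θ.get i ∈ ((ℬ ⊓ G₀ : Subgroup 𝒢) : Set 𝒢) * ((ℬ ⊓ ℋ : Subgroup 𝒢) : Set 𝒢)) ∧
    (i.val = θ.length - 1 →
      θ.get i ∈ ((ℬ ⊓ ℋ : Subgroup 𝒢) : Set 𝒢) * ((ℬ ⊓ G₀ : Subgroup 𝒢) : Set 𝒢)) ∧
    (0 < i.val → i.val < θ.length - 1 →
      θ.get i ∈ ((ℬ ⊓ ℋ : Subgroup 𝒢) : Set 𝒢) * ((ℬ ⊓ G₀ : Subgroup 𝒢) : Set 𝒢) *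
        ((ℬ ⊓ ℋ : Subgroup 𝒢) : Set 𝒢)) :=
  reduced_decomposition_letters_mem_general 𝒜 ℬ ℋ G₀ hamal hcomp₁ hcomp₂ h hh θ hθ i hi
end

section
/- In the amalgamated-product setting (𝒢 = 𝒜 *_∩ ℬ, ℋ an (𝒜,ℬ)-compatible subgroup, G a subgroup of 𝒢, A = 𝒜∩G, B = ℬ∩G, H = ℋ∩G, T = ⟨A,B⟩), assume in addition A ⊆ ℋ. Let h ∈ G be such that h = β₁αβ₂ for some β₁, β₂ ∈ ℬ∖𝒜 and α ∈ 𝒜∖ℬ (so h has a reduced (𝒜,ℬ)-decomposition of length 3 of the form ℬ𝒜ℬ). Then h ∈ ⟨H,T⟩ if and only if h ∈ B·ℋ·B. -/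
open Pointwise

/-!
Since `A ⊆ ℋ`, the group `⟨H, T⟩` is `⟨H, B⟩`, so `h` is a product of letters taken alternately
from `H ∖ ℬ` and `B ∖ ℋ`. Compatibility of `ℋ` writes each `η ∈ ℋ ∖ ℬ` as `p · w · p'` with
`p, p' ∈ ℋ ∩ ℬ` and `w` a reduced `(𝒜, ℬ)`-word that begins and ends in `𝒜 ∖ ℬ`. Gluing these
along a letter `b ∈ B ∖ ℋ` creates the junction `p' b p ∈ ℬ ∖ ℋ ⊆ ℬ ∖ 𝒜`, so nothing cancels and,
up to factors from `ℬ` on both sides, `h` is a reduced word with at least one `𝒜`-letter per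
`H`-letter. By uniqueness of normal forms in `𝒜 *_{𝒜 ∩ ℬ} ℬ`, the number of `𝒜`-letters is an
invariant of the double coset `ℬ h ℬ`, and `β₁ α β₂` has exactly one. Hence `h` has at most one
`H`-letter, i.e. `h ∈ B ℋ B`. Conversely `b η b' ∈ G` with `b, b' ∈ B` forces `η ∈ H`.
-/

section NormalWords

open scoped Classical

variable {𝒢 : Type*} [Group 𝒢] {U V L : Subgroup 𝒢} {u v w : List 𝒢} {x y c : 𝒢}

theorem mul_notMem_of_mem_iff_notMem (hx : x ∈ U ↔ x ∉ V) (hy : y ∈ U ↔ y ∉ V)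
    (hxy : x ∈ U ↔ y ∉ U) : x * y ∉ U ∧ x * y ∉ V := by
  by_cases hxU : x ∈ U
  · rw [U.mul_mem_cancel_left hxU, V.mul_mem_cancel_right (by tauto)]
    tauto
  · rw [U.mul_mem_cancel_right (by tauto), V.mul_mem_cancel_left (by tauto)]
    tauto

theorem mul_mem_iff_of_mem_iff_mem (hx : x ∈ U ↔ x ∉ V) (hy : y ∈ U ↔ y ∉ V)
    (hxy : x ∈ U ↔ y ∈ U) (hC : x * y ∉ U ⊓ V) : (x * y ∈ U ↔ y ∈ U) ∧ (x * y ∈ V ↔ y ∈ V) := by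
  rw [Subgroup.mem_inf] at hC
  by_cases hyU : y ∈ U
  · have := mul_mem (hxy.2 hyU) hyU
    tauto
  · have : x * y ∈ V := mul_mem (by tauto) (by tauto)
    tauto

/-- `IsReducedWord` for a pair of subgroups, except that the empty word is allowed. -/
def IsNormalWord (U V : Subgroup 𝒢) (w : List 𝒢) : Prop :=
  (∀ x ∈ w, x ∈ U ↔ x ∉ V) ∧ w.IsChain (fun a b => a ∈ U ↔ b ∉ U)

namespace IsNormalWord

theorem nil : IsNormalWord U V [] := by simp [IsNormalWord]

theorem singleton (hx : x ∈ U ↔ x ∉ V) : IsNormalWord U V [x] := by simp [IsNormalWord, hx]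

theorem cons_cons_iff :
    IsNormalWord U V (x :: y :: w) ↔
      (x ∈ U ↔ x ∉ V) ∧ (x ∈ U ↔ y ∉ U) ∧ IsNormalWord U V (y :: w) := by
  simp only [IsNormalWord, List.forall_mem_cons, List.isChain_cons_cons]
  tauto

theorem append_iff :
    IsNormalWord U V (u ++ v) ↔ IsNormalWord U V u ∧ IsNormalWord U V v ∧
      ∀ a ∈ u.getLast?, ∀ b ∈ v.head?, (a ∈ U ↔ b ∉ U) := by
  simp only [IsNormalWord, List.forall_mem_append, List.isChain_append]
  tauto

theorem tail (h : IsNormalWord U V (x :: w)) : IsNormalWord U V w :=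
  (append_iff (u := [x]).1 h).2.1

theorem cons_of_mem_iff (h : IsNormalWord U V (x :: w)) (hU : y ∈ U ↔ x ∈ U)
    (hV : y ∈ V ↔ x ∈ V) : IsNormalWord U V (y :: w) := by
  rw [← List.singleton_append, append_iff] at h ⊢
  refine ⟨singleton ?_, h.2.1, by simpa [hU] using h.2.2⟩
  rw [hU, hV]
  exact h.1.1 x (by simp)

theorem concat_of_mem_iff (h : IsNormalWord U V (w ++ [x])) (hU : y ∈ U ↔ x ∈ U)
    (hV : y ∈ V ↔ x ∈ V) : IsNormalWord U V (w ++ [y]) := by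
  rw [append_iff] at h ⊢
  refine ⟨h.1, singleton ?_, by simpa [hU] using h.2.2⟩
  rw [hU, hV]
  exact h.2.1.1 x (by simp)

theorem reverse_inv (h : IsNormalWord U V w) : IsNormalWord U V (w.map (·⁻¹)).reverse := by
  refine ⟨fun x hx => ?_, ?_⟩
  · obtain ⟨y, hy, rfl⟩ := List.mem_map.1 (List.mem_reverse.1 hx)
    simpa using h.1 y hy
  rw [List.isChain_reverse, List.isChain_map]
  simpa only [inv_mem_iff] using h.2.imp fun a b hab => by tauto

theorem of_inf (h : IsNormalWord (U ⊓ L) (V ⊓ L) w) : IsNormalWord U V w ∧ ∀ x ∈ w, x ∈ L := by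
  have hL : ∀ x ∈ w, x ∈ L := fun x hx => by
    have := h.1 x hx
    simp only [Subgroup.mem_inf] at this
    tauto
  refine ⟨⟨fun x hx => by simpa [hL x hx] using h.1 x hx, ?_⟩, hL⟩
  rw [List.IsChain.iff_mem]
  exact (List.IsChain.iff_mem.1 h.2).imp fun a b ⟨ha, hb, hab⟩ =>
    ⟨ha, hb, by simpa [hL a ha, hL b hb] using hab⟩

theorem exists_mul_prod_eq {t : 𝒢} (ht : t ∈ U ↔ t ∉ V) (hw : IsNormalWord U V w) :
    ∃ c ∈ U ⊓ V, ∃ w', IsNormalWord U V w' ∧ t * w.prod = c * w'.prod := by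
  obtain _ | ⟨x, w⟩ := w
  · exact ⟨1, one_mem _, [t], singleton ht, by simp⟩
  by_cases hside : t ∈ U ↔ x ∈ U
  · by_cases htx : t * x ∈ U ⊓ V
    · exact ⟨t * x, htx, w, hw.tail, by simp [mul_assoc]⟩
    · obtain ⟨hU, hV⟩ := mul_mem_iff_of_mem_iff_mem ht (hw.1 x (by simp)) hside htx
      exact ⟨1, one_mem _, t * x :: w, hw.cons_of_mem_iff hU hV, by simp [mul_assoc]⟩
  · exact ⟨1, one_mem _, t :: x :: w, cons_cons_iff.2 ⟨ht, by tauto, hw⟩, by simp⟩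

theorem exists_eq_mul_prod_of_mem_sup {g : 𝒢} (hg : g ∈ U ⊔ V) :
    ∃ c ∈ U ⊓ V, ∃ w, IsNormalWord U V w ∧ g = c * w.prod := by
  have step : ∀ s ∈ (U : Set 𝒢) ∪ V, ∀ g : 𝒢,
      (∃ c ∈ U ⊓ V, ∃ w, IsNormalWord U V w ∧ g = c * w.prod) →
      ∃ c ∈ U ⊓ V, ∃ w, IsNormalWord U V w ∧ s * g = c * w.prod := by
    rintro s hs g ⟨c, hc, w, hw, rfl⟩
    rw [← mul_assoc]
    by_cases hsc : s * c ∈ U ⊓ V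
    · exact ⟨s * c, hsc, w, hw, rfl⟩
    refine exists_mul_prod_eq ?_ hw
    rw [Subgroup.mem_inf] at hsc hc
    rcases hs with hs | hs
    · have := mul_mem (SetLike.mem_coe.1 hs) hc.1
      tauto
    · have := mul_mem (SetLike.mem_coe.1 hs) hc.2
      tauto
  rw [← U.closure_eq, ← V.closure_eq, ← Subgroup.closure_union] at hg
  induction hg using Subgroup.closure_induction_left with
  | one => exact ⟨1, one_mem _, [], nil, by simp⟩
  | mul_left s hs g _ ih => exact step s hs g ih
  | inv_mul_cancel s hs g _ ih =>
    refine step s⁻¹ ?_ g ih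
    rcases hs with hs | hs
    · exact Or.inl (inv_mem (SetLike.mem_coe.1 hs))
    · exact Or.inr (inv_mem (SetLike.mem_coe.1 hs))

end IsNormalWord

namespace IsAmalgamated

open IsNormalWord

variable (hamal : IsAmalgamated (U : Set 𝒢) V)
include hamal

theorem eq_nil_of_prod_eq_one (hw : IsNormalWord U V w) (h1 : w.prod = 1) : w = [] := by
  by_contra hne
  refine hamal w ⟨hne, fun x hx => ?_, ?_⟩ h1
  · have := hw.1 x hx
    simp only [Set.mem_union, Set.mem_sdiff, SetLike.mem_coe]
    tauto
  · exact (List.IsChain.iff_mem.1 hw.2).imp fun a b ⟨ha, hb, hab⟩ => by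
      simpa using mul_notMem_of_mem_iff_notMem (hw.1 a ha) (hw.1 b hb) hab

theorem prod_notMem_inf (hw : IsNormalWord U V w) (hne : w ≠ []) : w.prod ∉ U ⊓ V := by
  obtain _ | ⟨x, w⟩ := w
  · exact absurd rfl hne
  intro hC
  have hx := hw.cons_of_mem_iff (y := (x :: w).prod⁻¹ * x)
    (U.mul_mem_cancel_left (inv_mem hC.1)) (V.mul_mem_cancel_left (inv_mem hC.2))
  exact List.cons_ne_nil _ _
    (hamal.eq_nil_of_prod_eq_one hx (by simp only [List.prod_cons]; group))

theorem prod_ne_of_head_mem_iff_notMem (hu : IsNormalWord U V (x :: u))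
    (hv : IsNormalWord U V (y :: v)) (hxy : x ∈ U ↔ y ∉ U) : (x :: u).prod ≠ (y :: v).prod := by
  intro h
  have hw : IsNormalWord U V (((y :: v).map (·⁻¹)).reverse ++ x :: u) :=
    append_iff.2 ⟨hv.reverse_inv, hu, by simp [inv_mem_iff]; tauto⟩
  refine List.append_ne_nil_of_right_ne_nil _ (List.cons_ne_nil x u)
    (hamal.eq_nil_of_prod_eq_one hw ?_)
  rw [List.prod_append, ← List.prod_inv_reverse, h, inv_mul_cancel]

/-- Uniqueness of normal forms, as far as the number of `U`-letters is concerned. -/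
theorem countP_eq_of_mul_prod_eq (hc : c ∈ U ⊓ V) (hu : IsNormalWord U V u)
    (hv : IsNormalWord U V v) (h : c * u.prod = v.prod) :
    u.countP (· ∈ U) = v.countP (· ∈ U) := by
  induction u generalizing c v with
  | nil =>
    obtain _ | ⟨y, v⟩ := v
    · rfl
    · exact absurd (h ▸ by simpa using hc) (hamal.prod_notMem_inf hv (List.cons_ne_nil y v))
  | cons x u ih =>
    have hcx : IsNormalWord U V (c * x :: u) :=
      hu.cons_of_mem_iff (U.mul_mem_cancel_left hc.1) (V.mul_mem_cancel_left hc.2)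
    have hcxu : (c * x :: u).prod = v.prod := by simpa [mul_assoc] using h
    obtain _ | ⟨y, v⟩ := v
    · exact absurd (hamal.eq_nil_of_prod_eq_one hcx hcxu) (List.cons_ne_nil _ _)
    have hside : c * x ∈ U ↔ y ∈ U := by
      by_contra hne
      exact hamal.prod_ne_of_head_mem_iff_notMem hcx hv (by tauto) hcxu
    have hd : (y⁻¹ * (c * x)) * u.prod = v.prod := by
      simp only [List.prod_cons] at hcxu
      rw [mul_assoc, hcxu, inv_mul_cancel_left]
    by_cases hdC : y⁻¹ * (c * x) ∈ U ⊓ V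
    · have hxy : x ∈ U ↔ y ∈ U := by rw [← hside, U.mul_mem_cancel_left hc.1]
      simp [List.countP_cons, ih hdC hu.tail hv.tail hd, hxy]
    -- otherwise the first letters merge into a single letter and the heads still disagree
    obtain ⟨hdU, hdV⟩ := mul_mem_iff_of_mem_iff_mem (by simpa using hv.1 y (by simp))
      (hcx.1 _ (by simp)) (by simpa using hside.symm) hdC
    have hdu := hcx.cons_of_mem_iff hdU hdV
    obtain _ | ⟨z, v⟩ := v
    · exact absurd (hamal.eq_nil_of_prod_eq_one hdu (by simpa using hd)) (List.cons_ne_nil _ _)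
    have hyz := (cons_cons_iff.1 hv).2.1
    exact (hamal.prod_ne_of_head_mem_iff_notMem hdu hv.tail (by tauto) (by simpa using hd)).elim

end IsAmalgamated

def IsCoreWord (U V : Subgroup 𝒢) (w : List 𝒢) : Prop :=
  IsNormalWord U V w ∧ w ≠ [] ∧ (∀ x ∈ w.head?, x ∈ U) ∧ ∀ x ∈ w.getLast?, x ∈ U

namespace IsNormalWord

theorem exists_eq_append_isCoreWord (hw : IsNormalWord U V (x :: w)) (hx : x ∈ U) :
    ∃ w' l, x :: w = w' ++ l ∧ IsCoreWord U V w' ∧ ∀ y ∈ l, y ∈ V := by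
  obtain ⟨w₀, y, hy⟩ : ∃ w₀ y, x :: w = w₀ ++ [y] :=
    ⟨_, _, (List.dropLast_append_getLast (List.cons_ne_nil x w)).symm⟩
  rw [hy] at hw ⊢
  by_cases hyU : y ∈ U
  · refine ⟨w₀ ++ [y], [], by simp, ⟨hw, by simp, ?_, by simpa⟩, by simp⟩
    rw [← hy]
    simpa using hx
  obtain _ | ⟨z, w₀⟩ := w₀
  · exact absurd (List.cons_eq_cons.1 hy).1 (by rintro rfl; exact hyU hx)
  refine ⟨z :: w₀, [y], rfl, ⟨(append_iff.1 hw).1, List.cons_ne_nil _ _, ?_, ?_⟩, ?_⟩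
  · simpa [(List.cons_eq_cons.1 hy).1] using hx
  · exact fun a ha => by simpa [hyU] using (append_iff.1 hw).2.2 a ha y rfl
  · have := hw.1 y (by simp)
    simp only [List.mem_singleton, forall_eq]
    tauto

theorem exists_eq_append_append_isCoreWord (hw : IsNormalWord U V w) (hU : ∃ x ∈ w, x ∈ U) :
    ∃ l w' l', w = l ++ w' ++ l' ∧ IsCoreWord U V w' ∧ (∀ y ∈ l, y ∈ V) ∧ ∀ y ∈ l', y ∈ V := by
  obtain _ | ⟨x, w⟩ := w
  · simp at hU
  by_cases hx : x ∈ U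
  · obtain ⟨w', l', h, hc, hl'⟩ := exists_eq_append_isCoreWord hw hx
    exact ⟨[], w', l', by simp [h], hc, by simp, hl'⟩
  obtain _ | ⟨y, w⟩ := w
  · simp [hx] at hU
  obtain ⟨hxl, hxy, hyw⟩ := cons_cons_iff.1 hw
  obtain ⟨w', l', h, hc, hl'⟩ := exists_eq_append_isCoreWord hyw (by tauto)
  refine ⟨[x], w', l', by simp [h], hc, fun z hz => ?_, hl'⟩
  rw [List.mem_singleton.1 hz]
  tauto

theorem exists_mul_right {β : 𝒢} (hw : IsNormalWord U V w) (hne : w ≠ [])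
    (hlast : ∀ y ∈ w.getLast?, y ∈ U) (hβ : β ∈ V) :
    ∃ v, IsNormalWord U V v ∧ v.prod = w.prod * β ∧ v.countP (· ∈ U) = w.countP (· ∈ U) := by
  obtain rfl | ⟨w, y, rfl⟩ := w.eq_nil_or_concat
  · exact absurd rfl hne
  rw [List.concat_eq_append] at hw hlast ⊢
  have hy : y ∈ U := hlast y (by simp)
  by_cases hβU : β ∈ U
  · refine ⟨w ++ [y * β], hw.concat_of_mem_iff (U.mul_mem_cancel_right hβU)
      (V.mul_mem_cancel_right hβ), by simp [mul_assoc], ?_⟩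
    simp [List.countP_append, U.mul_mem_cancel_right hβU]
  · refine ⟨w ++ [y] ++ [β], append_iff.2 ⟨hw, singleton (by tauto), ?_⟩, by simp [mul_assoc],
      by simp [List.countP_cons, hβU]⟩
    simpa using iff_of_true hy hβU

end IsNormalWord

namespace IsCoreWord

open IsNormalWord

theorem countP_pos (hw : IsCoreWord U V w) : 0 < w.countP (· ∈ U) := by
  obtain ⟨-, hne, hh, -⟩ := hw
  obtain _ | ⟨x, w⟩ := w
  · exact absurd rfl hne
  exact List.countP_pos_iff.2 ⟨x, by simp, by simpa using hh x rfl⟩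

theorem append_cons {m : 𝒢} (hu : IsCoreWord U V u) (hv : IsCoreWord U V v) (hm : m ∈ V)
    (hmU : m ∉ U) : IsCoreWord U V (u ++ m :: v) := by
  obtain ⟨hu, hune, huh, hul⟩ := hu
  obtain ⟨hv, hvne, hvh, hvl⟩ := hv
  obtain _ | ⟨x, u⟩ := u
  · exact absurd rfl hune
  obtain _ | ⟨y, v⟩ := v
  · exact absurd rfl hvne
  have hyU : y ∈ U := hvh y rfl
  refine ⟨append_iff.2 ⟨hu, cons_cons_iff.2 ⟨by tauto, by tauto, hv⟩, ?_⟩, by simp, ?_, ?_⟩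
  · simp only [List.head?_cons, Option.mem_some_iff]
    rintro a ha _ rfl
    exact iff_of_true (hul a ha) hmU
  · simpa using huh
  · rwa [List.getLast?_append_of_ne_nil _ (List.cons_ne_nil _ _), List.getLast?_cons_cons]

theorem exists_mul_left {β : 𝒢} (hw : IsCoreWord U V w) (hβ : β ∈ V) :
    ∃ v, IsNormalWord U V v ∧ v ≠ [] ∧ (∀ y ∈ v.getLast?, y ∈ U) ∧ v.prod = β * w.prod ∧
      v.countP (· ∈ U) = w.countP (· ∈ U) := by
  obtain ⟨hw, hne, hh, hl⟩ := hw
  obtain _ | ⟨x, w⟩ := w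
  · exact absurd rfl hne
  have hx : x ∈ U := hh x rfl
  by_cases hβU : β ∈ U
  · refine ⟨β * x :: w, hw.cons_of_mem_iff (U.mul_mem_cancel_left hβU)
      (V.mul_mem_cancel_left hβ), List.cons_ne_nil _ _, ?_, by simp [mul_assoc], ?_⟩
    · rw [List.getLast?_cons] at hl ⊢
      cases h : w.getLast? <;> simp_all [U.mul_mem_cancel_left hβU]
    · simp [List.countP_cons, U.mul_mem_cancel_left hβU]
  · exact ⟨β :: x :: w, cons_cons_iff.2 ⟨by tauto, by tauto, hw⟩, List.cons_ne_nil _ _,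
      by simpa using hl, by simp, by simp [List.countP_cons, hβU]⟩

theorem exists_mul_mul {β β' : 𝒢} (hw : IsCoreWord U V w) (hβ : β ∈ V) (hβ' : β' ∈ V) :
    ∃ v, IsNormalWord U V v ∧ v.prod = β * w.prod * β' ∧
      v.countP (· ∈ U) = w.countP (· ∈ U) := by
  obtain ⟨v, hv, hne, hl, hprod, hcount⟩ := hw.exists_mul_left hβ
  obtain ⟨v', hv', hprod', hcount'⟩ := hv.exists_mul_right hne hl hβ'
  exact ⟨v', hv', by rw [hprod', hprod], hcount'.trans hcount⟩

end IsCoreWord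

theorem IsAmalgamated.countP_eq_of_mul_mul_eq (hamal : IsAmalgamated (U : Set 𝒢) V)
    {β β' γ γ' : 𝒢} (hu : IsCoreWord U V u) (hv : IsCoreWord U V v) (hβ : β ∈ V) (hβ' : β' ∈ V)
    (hγ : γ ∈ V) (hγ' : γ' ∈ V) (h : β * u.prod * β' = γ * v.prod * γ') :
    u.countP (· ∈ U) = v.countP (· ∈ U) := by
  obtain ⟨u', hu', hu'prod, hu'count⟩ := hu.exists_mul_mul hβ hβ'
  obtain ⟨v', hv', hv'prod, hv'count⟩ := hv.exists_mul_mul hγ hγ'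
  rw [← hu'count, ← hv'count]
  exact hamal.countP_eq_of_mul_prod_eq (one_mem _) hu' hv' (by rw [one_mul, hu'prod, hv'prod, h])

theorem prod_mem_mul_mul_of_countP_le_one {z : List 𝒢} (hz : ∀ x ∈ z, x ∈ U ∨ x ∈ V)
    (hk : z.countP (· ∈ U) ≤ 1) : z.prod ∈ (V : Set 𝒢) * U * V := by
  induction z with
  | nil => simpa using Set.mul_mem_mul (Set.mul_mem_mul V.one_mem U.one_mem) V.one_mem
  | cons x z ih =>
    rw [List.forall_mem_cons] at hz
    rw [List.prod_cons]
    by_cases hx : x ∈ U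
    · have h0 : z.countP (· ∈ U) = 0 := by
        simp only [List.countP_cons, hx, decide_true, if_true] at hk
        omega
      have hzV : z.prod ∈ V := V.list_prod_mem fun y hy =>
        (hz.2 y hy).resolve_left (by simpa using List.countP_eq_zero.1 h0 y hy)
      simpa using Set.mul_mem_mul (Set.mul_mem_mul V.one_mem hx) hzV
    · obtain ⟨_, ⟨v, hv, u, hu, rfl⟩, v', hv', hprod⟩ :=
        ih hz.2 (by simpa [List.countP_cons, hx] using hk)
      rw [← hprod, ← mul_assoc, ← mul_assoc]
      exact Set.mul_mem_mul (Set.mul_mem_mul (mul_mem (hz.1.resolve_left hx) hv) hu) hv'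

end NormalWords

section Compatible

open scoped Classical

variable {𝒢 : Type*} [Group 𝒢] {𝒜 ℬ ℋ : Subgroup 𝒢}

def HasCoreForm (𝒜 ℬ ℋ : Subgroup 𝒢) (k : ℕ) (g : 𝒢) : Prop :=
  ∃ p ∈ ℋ ⊓ ℬ, ∃ p' ∈ ℋ ⊓ ℬ, ∃ w, IsCoreWord 𝒜 ℬ w ∧ k ≤ w.countP (· ∈ 𝒜) ∧
    g = p * w.prod * p'

theorem HasCoreForm.mul_mul (hC : 𝒜 ⊓ ℬ ≤ ℋ) {g g' b : 𝒢} {k m : ℕ}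
    (hg : HasCoreForm 𝒜 ℬ ℋ k g) (hb : b ∈ ℬ) (hbH : b ∉ ℋ) (hg' : HasCoreForm 𝒜 ℬ ℋ m g') :
    HasCoreForm 𝒜 ℬ ℋ (k + m) (g * b * g') := by
  obtain ⟨p, hp, q, hq, w, hw, hk, rfl⟩ := hg
  obtain ⟨p', hp', q', hq', w', hw', hm, rfl⟩ := hg'
  have hjH : q * b * p' ∉ ℋ := by
    rwa [ℋ.mul_mem_cancel_right hp'.1, ℋ.mul_mem_cancel_left hq.1]
  have hjB : q * b * p' ∈ ℬ := mul_mem (mul_mem hq.2 hb) hp'.2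
  have hjA : q * b * p' ∉ 𝒜 := fun hjA => hjH (hC ⟨hjA, hjB⟩)
  refine ⟨p, hp, q', hq', w ++ q * b * p' :: w', hw.append_cons hw' hjB hjA, ?_, ?_⟩
  · simp only [List.countP_append, List.countP_cons, hjA, decide_false]
    omega
  · simp only [List.prod_append, List.prod_cons, mul_assoc]

theorem hasCoreForm_one_of_mem (hcomp : ℋ = 𝒜 ⊓ ℋ ⊔ ℬ ⊓ ℋ) {η : 𝒢} (hη : η ∈ ℋ) (hηB : η ∉ ℬ) :
    HasCoreForm 𝒜 ℬ ℋ 1 η := by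
  rw [hcomp] at hη
  obtain ⟨c, hc, w, hw, rfl⟩ := IsNormalWord.exists_eq_mul_prod_of_mem_sup hη
  obtain ⟨hw, hwH⟩ := hw.of_inf
  have hA : ∃ x ∈ w, x ∈ 𝒜 := by
    by_contra! hA
    exact hηB (mul_mem hc.2.1 (ℬ.list_prod_mem fun x hx => by have := hw.1 x hx; tauto))
  obtain ⟨l, w', l', rfl, hw', hl, hl'⟩ := hw.exists_eq_append_append_isCoreWord hA
  have hlH : l.prod ∈ ℋ := ℋ.list_prod_mem fun x hx => hwH x (by simp [hx])
  have hl'H : l'.prod ∈ ℋ := ℋ.list_prod_mem fun x hx => hwH x (by simp [hx])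
  refine ⟨c * l.prod, ⟨mul_mem hc.1.2 hlH, mul_mem hc.2.1 (ℬ.list_prod_mem hl)⟩, l'.prod,
    ⟨hl'H, ℬ.list_prod_mem hl'⟩, w', hw', hw'.countP_pos, by simp [List.prod_append, mul_assoc]⟩

namespace IsNormalWord

theorem exists_hasCoreForm_mul (hC : 𝒜 ⊓ ℬ ≤ ℋ) (hcomp : ℋ = 𝒜 ⊓ ℋ ⊔ ℬ ⊓ ℋ) :
    ∀ {η : 𝒢} {z : List 𝒢}, IsNormalWord ℋ ℬ (η :: z) → η ∈ ℋ →
      ∃ g, ∃ b ∈ ℬ, HasCoreForm 𝒜 ℬ ℋ ((η :: z).countP (· ∈ ℋ)) g ∧ (η :: z).prod = g * b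
  | η, [], hz, hη => by
    have hη' := hasCoreForm_one_of_mem hcomp hη (by simpa [hη] using hz.1 η)
    exact ⟨η, 1, one_mem _, by simpa [hη] using hη', by simp⟩
  | η, [b], hz, hη => by
    obtain ⟨hηl, hηb, hb⟩ := cons_cons_iff.1 hz
    have hbH : b ∉ ℋ := by tauto
    have hη' := hasCoreForm_one_of_mem hcomp hη (by tauto)
    exact ⟨η, b, by simpa [hbH] using hb.1 b, by simpa [hη, hbH] using hη', by simp⟩
  | η, b :: η' :: z, hz, hη => by
    obtain ⟨hηl, hηb, hz'⟩ := cons_cons_iff.1 hz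
    obtain ⟨hbl, hbη', hz''⟩ := cons_cons_iff.1 hz'
    have hbH : b ∉ ℋ := by tauto
    obtain ⟨g, b', hb', hg, hprod⟩ := exists_hasCoreForm_mul hC hcomp hz'' (by tauto)
    have hcount : (η :: b :: η' :: z).countP (· ∈ ℋ) = 1 + (η' :: z).countP (· ∈ ℋ) := by
      simp only [List.countP_cons, hη, hbH, decide_true, decide_false, Bool.false_eq_true,
        if_true, if_false]
      omega
    refine ⟨η * b * g, b', hb', hcount ▸ ?_, ?_⟩
    · exact (hasCoreForm_one_of_mem hcomp hη (by tauto)).mul_mul hC (by tauto) hbH hg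
    · simp only [List.prod_cons] at hprod ⊢
      rw [hprod]
      group

theorem exists_mul_hasCoreForm_mul (hC : 𝒜 ⊓ ℬ ≤ ℋ) (hcomp : ℋ = 𝒜 ⊓ ℋ ⊔ ℬ ⊓ ℋ)
    {z : List 𝒢} (hz : IsNormalWord ℋ ℬ z) (hk : 1 ≤ z.countP (· ∈ ℋ)) :
    ∃ β ∈ ℬ, ∃ g, ∃ β' ∈ ℬ, HasCoreForm 𝒜 ℬ ℋ (z.countP (· ∈ ℋ)) g ∧ z.prod = β * g * β' := by
  obtain _ | ⟨x, z⟩ := z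
  · simp at hk
  by_cases hx : x ∈ ℋ
  · obtain ⟨g, b, hb, hg, h⟩ := exists_hasCoreForm_mul hC hcomp hz hx
    exact ⟨1, one_mem _, g, b, hb, hg, by rw [h, one_mul]⟩
  obtain _ | ⟨y, z⟩ := z
  · simp [hx] at hk
  obtain ⟨hxl, hxy, hz'⟩ := cons_cons_iff.1 hz
  obtain ⟨g, b, hb, hg, h⟩ := exists_hasCoreForm_mul hC hcomp hz' (by tauto)
  refine ⟨x, by tauto, g, b, hb, by simpa [List.countP_cons (a := x), hx] using hg, ?_⟩
  rw [List.prod_cons, h, mul_assoc]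

end IsNormalWord

theorem IsAmalgamated.countP_le_one_of_prod_eq (hamal : IsAmalgamated (𝒜 : Set 𝒢) ℬ)
    (hC : 𝒜 ⊓ ℬ ≤ ℋ) (hcomp : ℋ = 𝒜 ⊓ ℋ ⊔ ℬ ⊓ ℋ) {z : List 𝒢} (hz : IsNormalWord ℋ ℬ z)
    {β α β' : 𝒢} (hβ : β ∈ ℬ) (hα : α ∈ 𝒜) (hαB : α ∉ ℬ) (hβ' : β' ∈ ℬ)
    (h : z.prod = β * α * β') : z.countP (· ∈ ℋ) ≤ 1 := by
  by_contra! hk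
  obtain ⟨γ, hγ, g, γ', hγ', ⟨p, hp, p', hp', w, hw, hkw, rfl⟩, hzprod⟩ :=
    hz.exists_mul_hasCoreForm_mul hC hcomp hk.le
  have hαw : IsCoreWord 𝒜 ℬ [α] :=
    ⟨IsNormalWord.singleton (iff_of_true hα hαB), List.cons_ne_nil _ _, by simpa using hα,
      by simpa using hα⟩
  have hcount := hamal.countP_eq_of_mul_mul_eq hw hαw (mul_mem hγ hp.2) (mul_mem hp'.2 hγ') hβ hβ'
    (by rw [List.prod_singleton, ← h, hzprod]; group)
  simp only [List.countP_singleton, hα, decide_true, if_true] at hcount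
  omega

end Compatible

theorem length_three_mem_iff_general {𝒢 : Type*} [Group 𝒢] (𝒜 ℬ ℋ G₀ : Subgroup 𝒢)
    (hamal : IsAmalgamated (𝒜 : Set 𝒢) (ℬ : Set 𝒢))
    (hcomp₁ : 𝒜 ⊓ ℬ ≤ ℋ)
    (hcomp₂ : ℋ = (𝒜 ⊓ ℋ) ⊔ (ℬ ⊓ ℋ))
    (hA : 𝒜 ⊓ G₀ ≤ ℋ)
    (h : 𝒢) (hh : h ∈ G₀) (β₁ α β₂ : 𝒢)
    (hβ₁ : β₁ ∈ ((ℬ : Set 𝒢) \ (𝒜 : Set 𝒢)))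
    (hβ₂ : β₂ ∈ ((ℬ : Set 𝒢) \ (𝒜 : Set 𝒢)))
    (hα : α ∈ ((𝒜 : Set 𝒢) \ (ℬ : Set 𝒢)))
    (hprod : h = β₁ * α * β₂) :
    h ∈ (ℋ ⊓ G₀) ⊔ ((𝒜 ⊓ G₀) ⊔ (ℬ ⊓ G₀)) ↔
      h ∈ ((ℬ ⊓ G₀ : Subgroup 𝒢) : Set 𝒢) * (ℋ : Set 𝒢) *
        ((ℬ ⊓ G₀ : Subgroup 𝒢) : Set 𝒢) := by
  classical
  rw [← sup_assoc, sup_eq_left.2 (le_inf hA inf_le_right)]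
  constructor
  · intro hmem
    obtain ⟨c, hc, z, hz, rfl⟩ := IsNormalWord.exists_eq_mul_prod_of_mem_sup hmem
    obtain ⟨hz, hzG⟩ := hz.of_inf
    have hk := hamal.countP_le_one_of_prod_eq hcomp₁ hcomp₂ hz (mul_mem (inv_mem hc.2.1) hβ₁.1)
      hα.1 hα.2 hβ₂.1 (by simp only [mul_assoc] at hprod ⊢; rw [← hprod, inv_mul_cancel_left])
    obtain ⟨_, ⟨b, hb, η, hη, rfl⟩, b', hb', hbηb'⟩ :=
      prod_mem_mul_mul_of_countP_le_one (U := ℋ) (V := ℬ ⊓ G₀)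
        (fun x hx => or_iff_not_imp_left.2 fun hxH => ⟨(hz.1 x hx).not_left.1 hxH, hzG x hx⟩) hk
    rw [← hbηb', ← mul_assoc, ← mul_assoc]
    exact Set.mul_mem_mul (Set.mul_mem_mul (mul_mem hc.2 hb) hη) hb'
  · rintro ⟨_, ⟨b, hb, η, hη, rfl⟩, b', hb', rfl⟩
    have hηG : η ∈ G₀ := by
      rw [← mul_inv_cancel_right η b', ← inv_mul_cancel_left b (η * b'), ← mul_assoc b]
      exact mul_mem (mul_mem (inv_mem hb.2) hh) (inv_mem hb'.2)
    exact mul_mem (mul_mem (Subgroup.mem_sup_right hb) (Subgroup.mem_sup_left ⟨hη, hηG⟩))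
      (Subgroup.mem_sup_right hb')

/-- **Edo–Kuroda, Corollary 3.10.**  In the amalgamated-product setting, assume moreover
`A ⊆ ℋ`.  If `h ∈ G₀` has a reduced `(𝒜,ℬ)`-decomposition of length `3` of the form
`ℬ𝒜ℬ`, then `h ∈ ⟨H,T⟩` if and only if `h ∈ B·ℋ·B`. -/
theorem length_three_mem_iff {𝒢 : Type*} [Group 𝒢] (𝒜 ℬ ℋ G₀ : Subgroup 𝒢)
    (hgen : 𝒜 ⊔ ℬ = ⊤)
    (hamal : IsAmalgamated (𝒜 : Set 𝒢) (ℬ : Set 𝒢))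
    (hcomp₁ : 𝒜 ⊓ ℬ ≤ ℋ)
    (hcomp₂ : ℋ = (𝒜 ⊓ ℋ) ⊔ (ℬ ⊓ ℋ))
    (hA : 𝒜 ⊓ G₀ ≤ ℋ)
    (h : 𝒢) (hh : h ∈ G₀) (β₁ α β₂ : 𝒢)
    (hβ₁ : β₁ ∈ ((ℬ : Set 𝒢) \ (𝒜 : Set 𝒢)))
    (hβ₂ : β₂ ∈ ((ℬ : Set 𝒢) \ (𝒜 : Set 𝒢)))
    (hα : α ∈ ((𝒜 : Set 𝒢) \ (ℬ : Set 𝒢)))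
    (hprod : h = β₁ * α * β₂) :
    h ∈ (ℋ ⊓ G₀) ⊔ ((𝒜 ⊓ G₀) ⊔ (ℬ ⊓ G₀)) ↔
      h ∈ ((ℬ ⊓ G₀ : Subgroup 𝒢) : Set 𝒢) * (ℋ : Set 𝒢) *
        ((ℬ ⊓ G₀ : Subgroup 𝒢) : Set 𝒢) :=
  length_three_mem_iff_general 𝒜 ℬ ℋ G₀ hamal hcomp₁ hcomp₂ hA h hh β₁ α β₂ hβ₁ hβ₂ hα hprod
end

section
/- Let K be a field of characteristic p ≥ 0, let 𝒜 = Aff₂(K), ℬ = BA₂(K), and let I be a subset of {n ∈ ℤ : n ≥ 2}. The following conditions are equivalent: (i) (𝒜∩ℬ)·B^I = B^I·(𝒜∩ℬ); (i') (𝒜∩ℬ)·B^I ⊆ B^I·(𝒜∩ℬ); (ii) for every n ∈ I and all a,b ∈ K, the polynomial (ay+b)^n lies in (⊕_{i∈I} K y^i) ⊕ Ky ⊕ K; (iii) for every n ∈ I, (y+1)^n lies in (⊕_{i∈I} K y^i) ⊕ Ky ⊕ K; (iv) for every n ∈ I and every integer k with 2 ≤ k ≤ n, either the binomial coefficient C(n,k)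 is zero in K or k ∈ I. -/
open MvPolynomial Pointwise

noncomputable section

variable {R : Type*} [CommRing R]

section PStable

variable (K : Type*) [Field K]

/-- The subgroup `B^I` of triangular automorphisms `(x + P(y), y)` with `P` in the
`K`-span of `{y^i : i ∈ I}`. -/
def BISet (I : Set ℕ) : Set (PolyAut K 2) :=
  {φ | ∃ P : Polynomial K,
    P ∈ Submodule.span K ((fun i => (Polynomial.X : Polynomial K) ^ i) '' I) ∧
    φ (X 0) = X 0 + Polynomial.aeval (X 1) P ∧ φ (X 1) = X 1}

/-- The subgroup `A^I` generated by the affine subgroup and `B^I`. -/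
def AISubgroup (I : Set ℕ) : Subgroup (PolyAut K 2) :=
  Subgroup.closure (affSet K 2 ∪ BISet K I)

/-- A subset `I` of `{n : n ≥ 2}` is `p`-stable (`p` the characteristic of `K`) if for
every `n ∈ I` and every `2 ≤ k ≤ n`, either `C(n,k) = 0` in `K` or `k ∈ I`. -/
def PStable (I : Set ℕ) : Prop :=
  (∀ n ∈ I, 2 ≤ n) ∧
  ∀ n ∈ I, ∀ k, 2 ≤ k → k ≤ n → ((n.choose k : K) = 0 ∨ k ∈ I)

end PStable

/-!
Both `𝒜 ∩ ℬ` and `B^I` consist of triangular automorphisms `(a x + f(y), d y + e)`: with `f`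
affine for the former, and with `a = d = 1`, `e = 0`, `f ∈ span {yⁱ : i ∈ I}` for the latter.
Multiplying out, `(𝒜 ∩ ℬ) B^I ⊆ B^I (𝒜 ∩ ℬ)` says exactly that every affine substitution
`y ↦ d y + e` maps `span {yⁱ : i ∈ I}` into `span {yⁱ : i ∈ I} ⊕ K y ⊕ K`, which by linearity is
(ii); as both factors are closed under inversion, the inclusion already forces equality.
Conditions (ii)–(iv) are compared coefficientwise: the coefficient of `yᵏ` in `(a y + b)ⁿ` is
`C(n,k) aᵏ bⁿ⁻ᵏ`.
-/

open scoped Polynomial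

theorem Set.mul_eq_mul_of_subset {G : Type*} [Group G] {A B : Set G} (hA : A⁻¹ ⊆ A)
    (hB : B⁻¹ ⊆ B) (h : A * B ⊆ B * A) : A * B = B * A := by
  have hA' : A⁻¹ = A := hA.antisymm (Set.inv_subset.1 hA)
  have hB' : B⁻¹ = B := hB.antisymm (Set.inv_subset.1 hB)
  refine h.antisymm ?_
  simpa [mul_inv_rev, hA', hB'] using Set.inv_subset_inv.2 h

namespace Polynomial

section Semiring

variable {R : Type*} [Semiring R]

theorem mem_span_X_pow_image_iff {S : Set ℕ} {p : R[X]} :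
    p ∈ Submodule.span R ((fun i => (X : R[X]) ^ i) '' S) ↔
      ∀ k, p.coeff k ≠ 0 → k ∈ S := by
  constructor
  · intro hp
    induction hp using Submodule.span_induction with
    | mem q hq =>
      obtain ⟨i, hi, rfl⟩ := hq
      intro k hk
      rw [coeff_X_pow] at hk
      obtain rfl : k = i := by by_contra h; simp [h] at hk
      exact hi
    | zero => simp
    | add q r _ _ hq hr =>
      intro k hk
      rw [coeff_add] at hk
      by_cases h : q.coeff k = 0
      · exact hr k (by simpa [h] using hk)
      · exact hq k h
    | smul c q _ hq => exact fun k hk => hq k (right_ne_zero_of_mul hk)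
  · intro h
    rw [p.as_sum_support_C_mul_X_pow]
    refine Submodule.sum_mem _ fun k hk => ?_
    rw [← smul_eq_C_mul]
    exact Submodule.smul_mem _ _ (Submodule.subset_span ⟨k, h k (mem_support_iff.mp hk), rfl⟩)

theorem mem_span_X_pow_image_union_X_one_iff {S : Set ℕ} {p : R[X]} :
    p ∈ Submodule.span R ((fun i => (X : R[X]) ^ i) '' S ∪ {X, 1}) ↔
      ∀ k, p.coeff k ≠ 0 → k ∈ S ∨ k < 2 := by
  have hset : (fun i => (X : R[X]) ^ i) '' S ∪ {X, 1} = (fun i => X ^ i) '' (S ∪ {1, 0}) := by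
    simp [Set.image_insert_eq]
  simp only [hset, mem_span_X_pow_image_iff, Set.mem_union, Set.mem_insert_iff,
    Set.mem_singleton_iff]
  refine forall₂_congr fun k _ => or_congr_right ?_
  omega

theorem X_add_one_pow_mem_span_iff {S : Set ℕ} {n : ℕ} :
    (X + 1 : R[X]) ^ n ∈ Submodule.span R ((fun i => (X : R[X]) ^ i) '' S ∪ {X, 1}) ↔
      ∀ k, 2 ≤ k → k ≤ n → (n.choose k : R) = 0 ∨ k ∈ S := by
  simp only [mem_span_X_pow_image_union_X_one_iff, coeff_X_add_one_pow]
  refine ⟨fun h k hk2 _ => or_iff_not_imp_left.2 fun hk => (h k hk).resolve_right (by omega),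
    fun h k hk => ?_⟩
  by_cases hkn : k ≤ n
  · by_cases hk2 : 2 ≤ k
    · exact .inl ((h k hk2 hkn).resolve_left hk)
    · exact .inr (by omega)
  · exact absurd (by rw [Nat.choose_eq_zero_of_lt (not_le.1 hkn), Nat.cast_zero]) hk

end Semiring

section CommSemiring

variable {R : Type*} [CommSemiring R]

theorem coeff_C_mul_X_add_C_pow (a b : R) (n k : ℕ) :
    ((C a * X + C b) ^ n).coeff k = a ^ k * b ^ (n - k) * n.choose k := by
  have hterm : ∀ m, (C a * X) ^ m * C b ^ (n - m) * (n.choose m : R[X]) =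
      C (a ^ m * b ^ (n - m) * n.choose m) * X ^ m := fun m => by
    rw [← C_eq_natCast, C_mul, C_mul, C_pow, C_pow]; ring
  simp_rw [add_pow, finsetSum_coeff, hterm, coeff_C_mul_X_pow, Finset.sum_ite_eq,
    Finset.mem_range, Nat.lt_succ_iff]
  split_ifs with hk
  · rfl
  · rw [Nat.choose_eq_zero_of_lt (not_le.mp hk), Nat.cast_zero, mul_zero]

theorem C_mul_X_add_C_pow_mem_span {S : Set ℕ} {n : ℕ}
    (h : ∀ k, 2 ≤ k → k ≤ n → (n.choose k : R) = 0 ∨ k ∈ S) (a b : R) :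
    (C a * X + C b) ^ n ∈ Submodule.span R ((fun i => (X : R[X]) ^ i) '' S ∪ {X, 1}) := by
  refine mem_span_X_pow_image_union_X_one_iff.2 fun k hk => ?_
  rw [coeff_C_mul_X_add_C_pow] at hk
  have hchoose : (n.choose k : R) ≠ 0 := right_ne_zero_of_mul hk
  have hkn : k ≤ n := by
    by_contra hkn
    exact hchoose (by rw [Nat.choose_eq_zero_of_lt (not_le.1 hkn), Nat.cast_zero])
  by_cases hk2 : 2 ≤ k
  · exact .inl ((h k hk2 hkn).resolve_left hchoose)
  · exact .inr (by omega)

theorem comp_mem_of_mem_span_X_pow_image {S : Set ℕ} {M : Submodule R R[X]} {p q : R[X]}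
    (hp : p ∈ Submodule.span R ((fun i => (X : R[X]) ^ i) '' S)) (hq : ∀ n ∈ S, q ^ n ∈ M) :
    p.comp q ∈ M := by
  refine (Submodule.span_le (p := M.comap (aeval q).toLinearMap)).2 ?_ hp
  rintro _ ⟨n, hn, rfl⟩
  simpa using hq n hn

theorem span_X_one_eq : Submodule.span R {(X : R[X]), 1} =
    Submodule.span R ((fun i => (X : R[X]) ^ i) '' {1, 0}) := by
  rw [Set.image_insert_eq, Set.image_singleton, pow_one, pow_zero]

theorem comp_mem_span_X_one {p q : R[X]} (hp : p ∈ Submodule.span R {X, 1})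
    (hq : q ∈ Submodule.span R {X, 1}) : p.comp q ∈ Submodule.span R {X, 1} := by
  rw [span_X_one_eq] at hp
  refine comp_mem_of_mem_span_X_pow_image hp ?_
  rintro n (rfl | rfl)
  · rwa [pow_one]
  · rw [pow_zero]
    exact Submodule.subset_span (Set.mem_insert_of_mem _ rfl)

end CommSemiring

end Polynomial

theorem MvPolynomial.coeff_single_eq_zero_of_mem_supported {R σ : Type*} [CommSemiring R]
    {s : Set σ} {i : σ} {p : MvPolynomial σ R} (hp : p ∈ supported R s) (hi : i ∉ s) :
    p.coeff (Finsupp.single i 1) = 0 := by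
  by_contra h
  exact hi (mem_supported.1 hp (mem_vars_iff_mem_support i |>.2
    ⟨_, mem_support_iff.2 h, by simp⟩))

namespace PolyAut

theorem ext_X {n : ℕ} {σ τ : PolyAut R n} (h : ∀ i, σ (X i) = τ (X i)) : σ = τ :=
  AlgEquiv.coe_toAlgHom_injective (algHom_ext h)

@[simp] theorem apply_C {n : ℕ} (σ : PolyAut R n) (r : R) : σ (C r) = C r :=
  σ.commutes r

def triangular (a : Rˣ) (f : R[X]) (d : Rˣ) (e : R) : PolyAut R 2 :=
  AlgEquiv.ofAlgHom
    (aeval ![C (a : R) * X 0 + Polynomial.aeval (X 1) f, C (d : R) * X 1 + C e])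
    (aeval ![C (↑a⁻¹ : R) * (X 0 - Polynomial.aeval (C (↑d⁻¹ : R) * (X 1 - C e)) f),
      C (↑d⁻¹ : R) * (X 1 - C e)])
    (by
      ext i : 1
      fin_cases i <;> simp [← Polynomial.aeval_algHom_apply, ← mul_assoc, ← C_mul])
    (by
      ext i : 1
      fin_cases i <;> simp [← Polynomial.aeval_algHom_apply, ← mul_assoc, ← C_mul])

@[simp] theorem triangular_apply_X_zero (a : Rˣ) (f : R[X]) (d : Rˣ) (e : R) :
    triangular a f d e (X 0) = C (a : R) * X 0 + Polynomial.aeval (X 1) f := by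
  simp [triangular]

@[simp] theorem triangular_apply_X_one (a : Rˣ) (f : R[X]) (d : Rˣ) (e : R) :
    triangular a f d e (X 1) = C (d : R) * X 1 + C e := by
  simp [triangular]

theorem triangular_mul (a : Rˣ) (f : R[X]) (d : Rˣ) (e : R) (a' : Rˣ) (f' : R[X]) (d' : Rˣ)
    (e' : R) :
    triangular a f d e * triangular a' f' d' e' =
      triangular (a * a') (Polynomial.C (a' : R) * f +
        f'.comp (Polynomial.C (d : R) * Polynomial.X + Polynomial.C e)) (d * d') (d' * e + e') := by
  refine ext_X fun i => ?_
  fin_cases i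
  · simp only [Fin.zero_eta, Fin.isValue, AlgEquiv.mul_apply, triangular_apply_X_zero, map_add,
      map_mul, apply_C, ← Polynomial.aeval_algHom_apply, triangular_apply_X_one, Units.val_mul,
      Polynomial.aeval_C, algebraMap_eq, Polynomial.aeval_comp, Polynomial.aeval_X]
    ring
  · simp only [Fin.mk_one, Fin.isValue, AlgEquiv.mul_apply, triangular_apply_X_one, map_add,
      map_mul, apply_C, Units.val_mul]
    ring

@[simp] theorem triangular_one_zero_one_zero : triangular (1 : Rˣ) 0 1 0 = 1 :=
  ext_X fun i => by fin_cases i <;> simp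

theorem triangular_inv (a : Rˣ) (f : R[X]) (d : Rˣ) (e : R) :
    (triangular a f d e)⁻¹ =
      triangular a⁻¹
        (-(Polynomial.C (↑a⁻¹ : R) *
          f.comp (Polynomial.C (↑d⁻¹ : R) * (Polynomial.X - Polynomial.C e))))
        d⁻¹ (-(↑d⁻¹ * e)) := by
  refine inv_eq_of_mul_eq_one_right ?_
  have hcomp : (Polynomial.C (↑d⁻¹ : R) * (Polynomial.X - Polynomial.C e)).comp
      (Polynomial.C (d : R) * Polynomial.X + Polynomial.C e) = Polynomial.X := by
    simp [← mul_assoc, ← Polynomial.C_mul]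
  rw [triangular_mul, ← triangular_one_zero_one_zero]
  simp [Polynomial.neg_comp, Polynomial.mul_comp, Polynomial.comp_assoc, hcomp]

theorem eq_of_triangular_eq {a a' d d' : Rˣ} {f f' : R[X]} {e e' : R}
    (h : triangular a f d e = triangular a' f' d' e') : f = f' := by
  have h0 := congrArg (aeval ![(0 : R[X]), Polynomial.X]) (congrArg (· (X 0)) h)
  simpa [← Polynomial.aeval_algHom_apply] using h0

theorem triangular_mem_affSet_inter_triSet (a d : Rˣ) {ℓ : R[X]}
    (hℓ : ℓ ∈ Submodule.span R {(Polynomial.X : R[X]), 1}) (e : R) :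
    triangular a ℓ d e ∈ affSet R 2 ∩ triSet R 2 := by
  obtain ⟨b, c, rfl⟩ := Submodule.mem_span_pair.1 hℓ
  refine ⟨⟨!![↑a, 0; b, ↑d], ![c, e], by simp [Matrix.det_fin_two_of], fun i => ?_⟩,
    fun i => ?_⟩
  · fin_cases i <;> simp [Fin.sum_univ_two, Polynomial.smul_eq_C_mul, add_assoc]
  · fin_cases i
    · simp
    · rw [Fin.mk_one, triangular_apply_X_one]
      exact Subalgebra.add_mem _ (Subalgebra.mul_mem _ (Subalgebra.algebraMap_mem _ (d : R))
        (Algebra.subset_adjoin (Set.mem_image_of_mem X (by simp))))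
        (Subalgebra.algebraMap_mem _ e)

theorem exists_triangular_of_mem_affSet_inter_triSet {σ : PolyAut R 2}
    (hσ : σ ∈ affSet R 2 ∩ triSet R 2) :
    ∃ a d : Rˣ, ∃ ℓ ∈ Submodule.span R {(Polynomial.X : R[X]), 1}, ∃ e,
      σ = triangular a ℓ d e := by
  obtain ⟨⟨M, b, hdet, hσX⟩, htri⟩ := hσ
  have hM : M 0 1 = 0 := by
    have hne : (0 : Fin 2 →₀ ℕ) ≠ Finsupp.single 0 1 :=
      (Finsupp.single_ne_zero.2 one_ne_zero).symm
    simpa [hσX, Fin.sum_univ_two, coeff_X, Finsupp.single_eq_single_iff, hne] using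
      coeff_single_eq_zero_of_mem_supported (htri 1) (i := 0) (by simp)
  rw [Matrix.det_fin_two, hM, zero_mul, sub_zero, IsUnit.mul_iff] at hdet
  refine ⟨hdet.1.unit, hdet.2.unit, Polynomial.C (M 1 0) * Polynomial.X + Polynomial.C (b 0),
    ?_, b 1, ext_X fun i => ?_⟩
  · exact Submodule.mem_span_pair.2 ⟨M 1 0, b 0, by simp [Polynomial.smul_eq_C_mul]⟩
  · fin_cases i <;> simp [hσX, Fin.sum_univ_two, hM, add_assoc]

theorem mem_affSet_inter_triSet_iff {σ : PolyAut R 2} :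
    σ ∈ affSet R 2 ∩ triSet R 2 ↔
      ∃ a d : Rˣ, ∃ ℓ ∈ Submodule.span R {(Polynomial.X : R[X]), 1}, ∃ e,
        σ = triangular a ℓ d e := by
  refine ⟨exists_triangular_of_mem_affSet_inter_triSet, ?_⟩
  rintro ⟨a, d, ℓ, hℓ, e, rfl⟩
  exact triangular_mem_affSet_inter_triSet a d hℓ e

theorem triangular_mul_triangular_one (a : Rˣ) (f : R[X]) (d : Rˣ) (e : R) (P : R[X]) :
    triangular a f d e * triangular 1 P 1 0 =
      triangular a (f + P.comp (Polynomial.C (d : R) * Polynomial.X + Polynomial.C e)) d e := by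
  simp [triangular_mul]

theorem triangular_one_mul_triangular (P : R[X]) (a : Rˣ) (f : R[X]) (d : Rˣ) (e : R) :
    triangular 1 P 1 0 * triangular a f d e =
      triangular a (Polynomial.C (a : R) * P + f) d e := by
  simp [triangular_mul]

theorem inv_affSet_inter_triSet_subset :
    (affSet R 2 ∩ triSet R 2)⁻¹ ⊆ affSet R 2 ∩ triSet R 2 := by
  intro σ hσ
  obtain ⟨a, d, ℓ, hℓ, e, hσ⟩ := mem_affSet_inter_triSet_iff.1 (Set.mem_inv.1 hσ)
  rw [← inv_inv σ, hσ, triangular_inv]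
  refine triangular_mem_affSet_inter_triSet _ _ ?_ _
  rw [← Polynomial.smul_eq_C_mul]
  refine Submodule.neg_mem _ (Submodule.smul_mem _ _ (Polynomial.comp_mem_span_X_one hℓ ?_))
  exact Submodule.mem_span_pair.2 ⟨↑d⁻¹, -(↑d⁻¹ * e), by
    simp only [Polynomial.smul_eq_C_mul, neg_smul, map_mul, mul_one]; ring⟩

variable {K : Type*} [Field K] {I : Set ℕ}

theorem mem_BISet_iff {σ : PolyAut K 2} :
    σ ∈ BISet K I ↔ ∃ P ∈ Submodule.span K ((fun i => (Polynomial.X : K[X]) ^ i) '' I),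
      σ = triangular 1 P 1 0 := by
  refine ⟨fun ⟨P, hP, h0, h1⟩ => ⟨P, hP, ext_X fun i => ?_⟩, ?_⟩
  · fin_cases i <;> simp [h0, h1]
  · rintro ⟨P, hP, rfl⟩
    exact ⟨P, hP, by simp, by simp⟩

theorem inv_BISet_subset : (BISet K I)⁻¹ ⊆ BISet K I := by
  intro σ hσ
  obtain ⟨P, hP, hσ⟩ := mem_BISet_iff.1 (Set.mem_inv.1 hσ)
  rw [← inv_inv σ, hσ, triangular_inv]
  exact mem_BISet_iff.2 ⟨-P, Submodule.neg_mem _ hP, by simp⟩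

theorem affSet_inter_triSet_mul_BISet_subset_iff :
    (affSet K 2 ∩ triSet K 2) * BISet K I ⊆ BISet K I * (affSet K 2 ∩ triSet K 2) ↔
      ∀ P ∈ Submodule.span K ((fun i => (Polynomial.X : K[X]) ^ i) '' I), ∀ (d : Kˣ) (e : K),
        P.comp (Polynomial.C (d : K) * Polynomial.X + Polynomial.C e) ∈
          Submodule.span K ((fun i => (Polynomial.X : K[X]) ^ i) '' I ∪ {Polynomial.X, 1}) := by
  simp only [Submodule.span_union, Submodule.mem_sup]
  constructor
  · intro h P hP d e
    obtain ⟨ψ, hψ, φ, hφ, hprod⟩ := h (Set.mul_mem_mul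
      (triangular_mem_affSet_inter_triSet 1 d (Submodule.zero_mem _) e)
      (mem_BISet_iff.2 ⟨P, hP, rfl⟩))
    obtain ⟨Q, hQ, rfl⟩ := mem_BISet_iff.1 hψ
    obtain ⟨a, d', ℓ, hℓ, e', rfl⟩ := mem_affSet_inter_triSet_iff.1 hφ
    dsimp only at hprod
    rw [triangular_one_mul_triangular, triangular_mul_triangular_one] at hprod
    refine ⟨_, Submodule.smul_mem _ (a : K) hQ, ℓ, hℓ, ?_⟩
    rw [Polynomial.smul_eq_C_mul, eq_of_triangular_eq hprod, zero_add]
  · rintro h _ ⟨φ, hφ, ψ, hψ, rfl⟩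
    obtain ⟨a, d, ℓ, hℓ, e, rfl⟩ := mem_affSet_inter_triSet_iff.1 hφ
    obtain ⟨P, hP, rfl⟩ := mem_BISet_iff.1 hψ
    obtain ⟨Q, hQ, ℓ₀, hℓ₀, hsum⟩ := h P hP d e
    refine ⟨_, mem_BISet_iff.2 ⟨_, Submodule.smul_mem _ (↑a⁻¹ : K) hQ, rfl⟩,
      _, triangular_mem_affSet_inter_triSet a d (Submodule.add_mem _ hℓ hℓ₀) e, ?_⟩
    dsimp only
    rw [triangular_one_mul_triangular, triangular_mul_triangular_one, ← hsum,
      Polynomial.smul_eq_C_mul, ← mul_assoc, ← Polynomial.C_mul, Units.mul_inv,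
      Polynomial.C_1, one_mul, add_left_comm]

end PolyAut

theorem pStable_tfae_general (K : Type*) [Field K] (I : Set ℕ) :
    [ -- (i)
      (affSet K 2 ∩ triSet K 2) * BISet K I = BISet K I * (affSet K 2 ∩ triSet K 2),
      -- (i')
      (affSet K 2 ∩ triSet K 2) * BISet K I ⊆ BISet K I * (affSet K 2 ∩ triSet K 2),
      -- (ii)
      ∀ n ∈ I, ∀ a b : K, (Polynomial.C a * Polynomial.X + Polynomial.C b) ^ n ∈
        Submodule.span K
          (((fun i => (Polynomial.X : Polynomial K) ^ i) '' I) ∪ {Polynomial.X, 1}),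
      -- (iii)
      ∀ n ∈ I, ((Polynomial.X : Polynomial K) + 1) ^ n ∈
        Submodule.span K
          (((fun i => (Polynomial.X : Polynomial K) ^ i) '' I) ∪ {Polynomial.X, 1}),
      -- (iv)
      ∀ n ∈ I, ∀ k, 2 ≤ k → k ≤ n → ((n.choose k : K) = 0 ∨ k ∈ I) ].TFAE := by
  tfae_have 1 → 2 := fun h => h.subset
  tfae_have 2 → 1 := Set.mul_eq_mul_of_subset PolyAut.inv_affSet_inter_triSet_subset
    PolyAut.inv_BISet_subset
  tfae_have 2 → 4 := fun h n hn => by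
    simpa using PolyAut.affSet_inter_triSet_mul_BISet_subset_iff.1 h _
      (Submodule.subset_span ⟨n, hn, rfl⟩) 1 1
  tfae_have 4 → 5 := fun h n hn => Polynomial.X_add_one_pow_mem_span_iff.1 (h n hn)
  tfae_have 5 → 3 := fun h n hn => Polynomial.C_mul_X_add_C_pow_mem_span (h n hn)
  tfae_have 3 → 2 := fun h => PolyAut.affSet_inter_triSet_mul_BISet_subset_iff.2
    fun P hP d e => Polynomial.comp_mem_of_mem_span_X_pow_image hP fun n hn => h n hn d e
  tfae_finish

/-- **Edo–Kuroda, Proposition 4.1.**  Equivalent characterisations of `p`-stability of a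
subset `I ⊆ {n : n ≥ 2}`, over a field `K` of characteristic `p ≥ 0`. -/
theorem pStable_tfae (K : Type*) [Field K] (I : Set ℕ) (hI : ∀ n ∈ I, 2 ≤ n) :
    [ -- (i)
      (affSet K 2 ∩ triSet K 2) * BISet K I = BISet K I * (affSet K 2 ∩ triSet K 2),
      -- (i')
      (affSet K 2 ∩ triSet K 2) * BISet K I ⊆ BISet K I * (affSet K 2 ∩ triSet K 2),
      -- (ii)
      ∀ n ∈ I, ∀ a b : K, (Polynomial.C a * Polynomial.X + Polynomial.C b) ^ n ∈
        Submodule.span K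
          (((fun i => (Polynomial.X : Polynomial K) ^ i) '' I) ∪ {Polynomial.X, 1}),
      -- (iii)
      ∀ n ∈ I, ((Polynomial.X : Polynomial K) + 1) ^ n ∈
        Submodule.span K
          (((fun i => (Polynomial.X : Polynomial K) ^ i) '' I) ∪ {Polynomial.X, 1}),
      -- (iv)
      ∀ n ∈ I, ∀ k, 2 ≤ k → k ≤ n → ((n.choose k : K) = 0 ∨ k ∈ I) ].TFAE :=
  pStable_tfae_general K I
end
end

section
/- Let p be a prime and let n, k be positive integers. Then the sets pⁿ·{1,…,k} = {pⁿ m : 1 ≤ m ≤ k} and pⁿ·ℕ₊ = {pⁿ m : m ≥ 1} are p-stable: for every element m of the set and every integer j with 2 ≤ j ≤ m, either p divides the binomial coefficient C(m,j) or j belongs to the set. -/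
/-!
By Lucas' theorem, `C(p m, j) ≡ C(0, j mod p) · C(m, j / p) (mod p)`, so `p ∤ C(p m, j)` forces
`p ∣ j`, and then `C(p m, p j') ≡ C(m, j') (mod p)`. Iterating, `p ∤ C(pⁿ l, j)` forces `pⁿ ∣ j`,
so every `j ≤ pⁿ l` with `p ∤ C(pⁿ l, j)` is itself `pⁿ l'` with `l' ≤ l`.
-/

namespace Nat.Prime

open Choose

variable {p : ℕ}

theorem dvd_of_dvd_of_not_dvd_choose (hp : p.Prime) {m j : ℕ} (hm : p ∣ m)
    (hmj : ¬ p ∣ m.choose j) : p ∣ j := by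
  have := Fact.mk hp
  by_contra hj
  have hlucas := choose_modEq_choose_mod_mul_choose_div_nat (p := p) (n := m) (k := j)
  rw [Nat.eq_zero_of_dvd_of_lt ((Nat.dvd_mod_iff dvd_rfl).2 hm) (Nat.mod_lt m hp.pos),
    Nat.choose_eq_zero_of_lt (Nat.pos_of_ne_zero (mt Nat.dvd_of_mod_eq_zero hj)), zero_mul]
    at hlucas
  exact hmj (Nat.modEq_zero_iff_dvd.1 hlucas)

theorem pow_dvd_of_pow_dvd_of_not_dvd_choose (hp : p.Prime) {n m j : ℕ} (hm : p ^ n ∣ m)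
    (hmj : ¬ p ∣ m.choose j) : p ^ n ∣ j := by
  have := Fact.mk hp
  induction n generalizing m j with
  | zero => exact one_dvd j
  | succ n ih =>
    obtain ⟨m', rfl⟩ : p ∣ m := (dvd_pow_self p n.succ_ne_zero).trans hm
    obtain ⟨j', rfl⟩ := hp.dvd_of_dvd_of_not_dvd_choose (dvd_mul_right p m') hmj
    have hm' : p ^ n ∣ m' := by
      rwa [pow_succ', Nat.mul_dvd_mul_iff_left hp.pos] at hm
    have hmj' : ¬ p ∣ m'.choose j' := fun h =>
      hmj (Nat.modEq_zero_iff_dvd.1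
        (choose_mul_mul_modEq_choose_nat.trans (Nat.modEq_zero_iff_dvd.2 h)))
    rw [pow_succ']
    exact mul_dvd_mul_left p (ih hm' hmj')

theorem exists_pow_mul_of_not_dvd_choose (hp : p.Prime) {n l j : ℕ} (hj : 0 < j)
    (hjl : j ≤ p ^ n * l) (hlj : ¬ p ∣ (p ^ n * l).choose j) :
    ∃ l', 1 ≤ l' ∧ l' ≤ l ∧ j = p ^ n * l' := by
  obtain ⟨l', rfl⟩ := hp.pow_dvd_of_pow_dvd_of_not_dvd_choose (dvd_mul_right _ l) hlj
  exact ⟨l', Nat.pos_of_mul_pos_left hj, Nat.le_of_mul_le_mul_left hjl (pow_pos hp.pos n), rfl⟩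

end Nat.Prime

theorem pow_mul_sets_pStable_general (p : ℕ) (hp : p.Prime) (n k : ℕ) :
    (∀ m ∈ {m : ℕ | ∃ l, 1 ≤ l ∧ l ≤ k ∧ m = p ^ n * l},
      ∀ j, 2 ≤ j → j ≤ m →
        p ∣ m.choose j ∨ j ∈ {m : ℕ | ∃ l, 1 ≤ l ∧ l ≤ k ∧ m = p ^ n * l}) ∧
    (∀ m ∈ {m : ℕ | ∃ l, 1 ≤ l ∧ m = p ^ n * l},
      ∀ j, 2 ≤ j → j ≤ m →
        p ∣ m.choose j ∨ j ∈ {m : ℕ | ∃ l, 1 ≤ l ∧ m = p ^ n * l}) := by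
  constructor
  · rintro _ ⟨l, -, hlk, rfl⟩ j hj hjm
    refine or_iff_not_imp_left.2 fun hlj => ?_
    obtain ⟨l', hl', hl'l, rfl⟩ := hp.exists_pow_mul_of_not_dvd_choose (by omega) hjm hlj
    exact ⟨l', hl', hl'l.trans hlk, rfl⟩
  · rintro _ ⟨l, -, rfl⟩ j hj hjm
    refine or_iff_not_imp_left.2 fun hlj => ?_
    obtain ⟨l', hl', -, rfl⟩ := hp.exists_pow_mul_of_not_dvd_choose (by omega) hjm hlj
    exact ⟨l', hl', rfl⟩

/-- **Edo–Kuroda, Remark 4.2 (3).**  For a prime `p` and positive integers `n, k`, the sets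
`pⁿ·{1,…,k}` and `pⁿ·ℕ₊` are `p`-stable: for every element `m` of the set and every integer
`j` with `2 ≤ j ≤ m`, either `p` divides `C(m,j)` or `j` belongs to the set. -/
theorem pow_mul_sets_pStable (p : ℕ) (hp : p.Prime) (n k : ℕ) (hn : 0 < n) (hk : 0 < k) :
    (∀ m ∈ {m : ℕ | ∃ l, 1 ≤ l ∧ l ≤ k ∧ m = p ^ n * l},
      ∀ j, 2 ≤ j → j ≤ m →
        p ∣ m.choose j ∨ j ∈ {m : ℕ | ∃ l, 1 ≤ l ∧ l ≤ k ∧ m = p ^ n * l}) ∧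
    (∀ m ∈ {m : ℕ | ∃ l, 1 ≤ l ∧ m = p ^ n * l},
      ∀ j, 2 ≤ j → j ≤ m →
        p ∣ m.choose j ∨ j ∈ {m : ℕ | ∃ l, 1 ≤ l ∧ m = p ^ n * l}) :=
  pow_mul_sets_pStable_general p hp n k
end
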